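/- arXiv:math/9905018 — 6 statements merged into one kernel-verified Lean document; each statement's English description precedes it below -/
import Mathlib

section
/- Let S be a set of n ≥ 3 points in the Euclidean plane in general position, with n odd. Then the reduced Euler characteristic of the Voronoi poset of S is zero: with the convention f_0 = 1, the alternating sum ∑_{k=0}^{n} (−1)^k f_k equals 0. -/
open scoped Classical

noncomputable section

/-- The Euclidean plane. -/
abbrev Plane := EuclideanSpace ℝ (Fin 2)

/-- General position: no three points of `S` are collinear and
no four points of `S` lie on a common circle. -/
def GenPos (S : Finset Plane) : Prop :=
  (∀ T ⊆ S, T.card = 3 → ¬ Collinear ℝ (T : Set Plane)) ∧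
  (∀ T ⊆ S, T.card = 4 → ¬ ∃ (o : Plane) (r : ℝ), ∀ p ∈ T, dist p o = r)

/-- The Voronoi region of `A ⊆ S`: points at least as close to every
point of `A` as to every point of `S \ A`. -/
def VorRegion (S A : Finset Plane) : Set Plane :=
  {p | ∀ x ∈ A, ∀ y ∈ S \ A, dist p x ≤ dist p y}

/-- `fVec S k` : the number of `k`-element subsets `A` of `S` with
nonempty Voronoi region, i.e. the number of regions of the `k`-th
order Voronoi diagram. -/
def fVec (S : Finset Plane) (k : ℕ) : ℕ :=
  ((S.powersetCard k).filter (fun A => (VorRegion S A).Nonempty)).card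

/-- `fInfVec S k` : the number of `k`-element subsets `A` of `S` whose
Voronoi region is nonempty and unbounded. -/
def fInfVec (S : Finset Plane) (k : ℕ) : ℕ :=
  ((S.powersetCard k).filter
    (fun A => (VorRegion S A).Nonempty ∧
      ¬ Bornology.IsBounded (VorRegion S A))).card

/-- `cVec S i` : the number of 3-element subsets `T` of `S` whose
circumscribed circle contains exactly `i` points of `S \ T` strictly
inside (`0` for `i < 0`). -/
def cVec (S : Finset Plane) (i : ℤ) : ℕ :=
  ((S.powersetCard 3).filter (fun T => ∃ (o : Plane) (r : ℝ),
    (∀ p ∈ T, dist p o = r) ∧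
    (((S \ T).filter (fun q => dist q o < r)).card : ℤ) = i)).card


namespace VorAux

open RealInnerProductSpace

/-! ### Coordinates in the plane -/

lemma inner2 (a b : Plane) : ⟪a, b⟫ = a 0 * b 0 + a 1 * b 1 := by
  simp [PiLp.inner_apply, RCLike.inner_apply, Fin.sum_univ_two, mul_comm]

def mk2 (x y : ℝ) : Plane := (WithLp.equiv 2 (Fin 2 → ℝ)).symm ![x, y]

@[simp] lemma mk2_zero (x y : ℝ) : mk2 x y 0 = x := rfl
@[simp] lemma mk2_one (x y : ℝ) : mk2 x y 1 = y := rfl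

lemma ext2 {a b : Plane} (h0 : a 0 = b 0) (h1 : a 1 = b 1) : a = b := by
  ext i
  fin_cases i <;> assumption

@[simp] lemma smul_apply2 (c : ℝ) (a : Plane) (i : Fin 2) : (c • a) i = c * a i := rfl

lemma ne_zero_coord {d : Plane} (hd : d ≠ 0) : d 0 ≠ 0 ∨ d 1 ≠ 0 := by
  by_contra h
  push_neg at h
  exact hd (ext2 h.1 h.2)

def perp (d : Plane) : Plane := mk2 (-(d 1)) (d 0)

@[simp] lemma inner_perp_self (d : Plane) : ⟪d, perp d⟫ = 0 := by
  simp [inner2, perp]; ring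

lemma perp_ne_zero {d : Plane} (hd : d ≠ 0) : perp d ≠ 0 := by
  intro h
  rcases ne_zero_coord hd with h0 | h1
  · exact h0 (by simpa [perp] using congrArg (fun v : Plane => v 1) h)
  · have := congrArg (fun v : Plane => v 0) h
    simp only [mk2_zero, perp] at this
    exact h1 (by simpa [perp] using this)

lemma perp_mem {d e : Plane} (hd : d ≠ 0) (h : ⟪d, e⟫ = 0) : ∃ c : ℝ, e = c • perp d := by
  rw [inner2] at h
  rcases ne_zero_coord hd with h0 | h1
  · refine ⟨e 1 / d 0, ext2 ?_ ?_⟩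
    · simp [perp]
      field_simp
      nlinarith [h]
    · simp [perp]
      field_simp
  · refine ⟨-(e 0) / d 1, ext2 ?_ ?_⟩
    · simp [perp]
      field_simp
    · simp [perp]
      field_simp
      nlinarith [h]

/-! ### The lifted linear functional -/

def phi (u x : Plane) : ℝ := ⟪u, x⟫ + ‖x‖ ^ 2

lemma phi_add (v d x : Plane) : phi (v + d) x = phi v x + ⟪d, x⟫ := by
  simp [phi, inner_add_left]; ring

lemma phi_add_smul (v d x : Plane) (c : ℝ) :
    phi (v + c • d) x = phi v x + c * ⟪d, x⟫ := by
  simp [phi, inner_add_left, real_inner_smul_left]; ring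

def wkC (S A : Finset Plane) (u : Plane) : Prop :=
  ∀ x ∈ A, ∀ y ∈ S \ A, phi u x ≤ phi u y

def wkL (S A : Finset Plane) (d : Plane) : Prop :=
  ∀ x ∈ A, ∀ y ∈ S \ A, ⟪d, x⟫ ≤ ⟪d, y⟫

lemma dist_le_iff (p x y : Plane) :
    dist p x ≤ dist p y ↔ phi (-(2:ℝ) • p) x ≤ phi (-(2:ℝ) • p) y := by
  rw [dist_eq_norm, dist_eq_norm]
  constructor
  · intro h
    have h2 : ‖p - x‖ ^ 2 ≤ ‖p - y‖ ^ 2 := by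
      apply pow_le_pow_left₀ (norm_nonneg _) h
    rw [norm_sub_sq_real, norm_sub_sq_real] at h2
    simp only [phi, real_inner_smul_left]
    nlinarith [real_inner_comm p x, real_inner_comm p y]
  · intro h
    simp only [phi, real_inner_smul_left] at h
    have h2 : ‖p - x‖ ^ 2 ≤ ‖p - y‖ ^ 2 := by
      rw [norm_sub_sq_real, norm_sub_sq_real]
      nlinarith [real_inner_comm p x, real_inner_comm p y]
    nlinarith [norm_nonneg (p - x), norm_nonneg (p - y)]

lemma vor_nonempty_iff (S A : Finset Plane) :
    (VorRegion S A).Nonempty ↔ ∃ u, wkC S A u := by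
  constructor
  · rintro ⟨p, hp⟩
    exact ⟨-(2:ℝ) • p, fun x hx y hy => (dist_le_iff p x y).1 (hp x hx y hy)⟩
  · rintro ⟨u, hu⟩
    refine ⟨(-(2:ℝ))⁻¹ • u, ?_⟩
    intro x hx y hy
    have hu' : -(2:ℝ) • ((-(2:ℝ))⁻¹ • u) = u := by
      rw [smul_smul]
      norm_num
    rw [dist_le_iff]
    rw [hu']
    exact hu x hx y hy

lemma ties_same_level {S A : Finset Plane} {f : Plane → ℝ}
    (hcut : ∀ x ∈ A, ∀ y ∈ S \ A, f x ≤ f y)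
    {x₁ y₁ x₂ y₂ : Plane} (hx₁ : x₁ ∈ A) (hy₁ : y₁ ∈ S \ A)
    (hx₂ : x₂ ∈ A) (hy₂ : y₂ ∈ S \ A)
    (t₁ : f x₁ = f y₁) (t₂ : f x₂ = f y₂) : f x₁ = f x₂ := by
  have h1 := hcut x₁ hx₁ y₂ hy₂
  have h2 := hcut x₂ hx₂ y₁ hy₁
  linarith [t₁, t₂]

/-! ### General position consequences -/

lemma collinear_of_perp {d x y z : Plane} (hd : d ≠ 0)
    (hy : ⟪d, y - x⟫ = 0) (hz : ⟪d, z - x⟫ = 0) :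
    Collinear ℝ ({x, y, z} : Set Plane) := by
  apply (collinear_iff_of_mem (Set.mem_insert x _)).2
  refine ⟨perp d, ?_⟩
  intro p hp
  rcases hp with rfl | hp
  · exact ⟨0, by simp⟩
  rcases hp with rfl | hp
  · obtain ⟨c, hc⟩ := perp_mem hd hy
    exact ⟨c, by rw [← hc]; simp⟩
  · rw [Set.mem_singleton_iff] at hp
    subst hp
    obtain ⟨c, hc⟩ := perp_mem hd hz
    exact ⟨c, by rw [← hc]; simp⟩

lemma level_card_le_two {S : Finset Plane} (hgp : GenPos S) {d : Plane} (hd : d ≠ 0) (c : ℝ) :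
    (S.filter fun p => ⟪d, p⟫ = c).card ≤ 2 := by
  by_contra h
  push_neg at h
  obtain ⟨T, hTsub, hTcard⟩ := Finset.exists_subset_card_eq (Nat.succ_le_of_lt h)
  obtain ⟨x, y, z, hxy, hxz, hyz, rfl⟩ := Finset.card_eq_three.1 hTcard
  have hmem : ∀ p ∈ ({x, y, z} : Finset Plane), p ∈ S ∧ ⟪d, p⟫ = c := by
    intro p hp
    have := hTsub hp
    simpa using Finset.mem_filter.1 this
  refine hgp.1 {x, y, z} ?_ hTcard ?_
  · intro p hp; exact (hmem p hp).1
  · have hx := (hmem x (by simp)).2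
    have hy := (hmem y (by simp)).2
    have hz := (hmem z (by simp)).2
    have : (({x, y, z} : Finset Plane) : Set Plane) = ({x, y, z} : Set Plane) := by simp
    rw [this]
    exact collinear_of_perp hd (by rw [inner_sub_right]; linarith)
      (by rw [inner_sub_right]; linarith)

lemma circle_card_le_three {S : Finset Plane} (hgp : GenPos S) (v : Plane) (t : ℝ) :
    (S.filter fun p => phi v p = t).card ≤ 3 := by
  by_contra h
  push_neg at h
  obtain ⟨T, hTsub, hTcard⟩ := Finset.exists_subset_card_eq (Nat.succ_le_of_lt h)
  refine hgp.2 T (fun p hp => (Finset.mem_filter.1 (hTsub hp)).1) hTcard ?_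
  set o : Plane := (-(2⁻¹ : ℝ)) • v with ho
  refine ⟨o, Real.sqrt (t + ‖o‖^2), ?_⟩
  intro p hp
  have hphi : phi v p = t := (Finset.mem_filter.1 (hTsub hp)).2
  have hsq : dist p o ^ 2 = t + ‖o‖^2 := by
    rw [dist_eq_norm, norm_sub_sq_real]
    have h1 : ⟪p, o⟫ = -(2⁻¹ : ℝ) * ⟪p, v⟫ := by
      rw [ho, real_inner_smul_right]
    have h2 : ⟪v, p⟫ = ⟪p, v⟫ := real_inner_comm p v
    simp only [phi] at hphi
    nlinarith [hphi, h1, h2]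
  rw [← hsq, Real.sqrt_sq dist_nonneg]

/-! ### From weak linear cuts to circular cuts -/

lemma strict_to_wkC (S : Finset Plane) {A : Finset Plane} {d : Plane}
    (hstrict : ∀ x ∈ A, ∀ y ∈ S \ A, ⟪d, x⟫ < ⟪d, y⟫) : ∃ u, wkC S A u := by
  set F := A ×ˢ (S \ A) with hF
  by_cases hFne : F.Nonempty
  · set s := F.sup' hFne (fun p => (‖p.1‖^2 - ‖p.2‖^2) / (⟪d, p.2⟫ - ⟪d, p.1⟫)) with hs
    refine ⟨s • d, ?_⟩
    intro x hx y hy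
    have hmem : (x, y) ∈ F := Finset.mem_product.2 ⟨hx, hy⟩
    have hgap : 0 < ⟪d, y⟫ - ⟪d, x⟫ := sub_pos.2 (hstrict x hx y hy)
    have hle : (‖x‖^2 - ‖y‖^2) / (⟪d, y⟫ - ⟪d, x⟫) ≤ s :=
      Finset.le_sup' (f := fun p : Plane × Plane =>
        (‖p.1‖^2 - ‖p.2‖^2) / (⟪d, p.2⟫ - ⟪d, p.1⟫)) hmem
    have : ‖x‖^2 - ‖y‖^2 ≤ s * (⟪d, y⟫ - ⟪d, x⟫) := by
      rwa [div_le_iff₀ hgap] at hle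
    simp only [phi, real_inner_smul_left]
    nlinarith
  · refine ⟨0, ?_⟩
    intro x hx y hy
    exact absurd ⟨(x, y), Finset.mem_product.2 ⟨hx, hy⟩⟩ hFne

lemma wkL_strictify {S : Finset Plane} (hgp : GenPos S) {A : Finset Plane} (hA : A ⊆ S)
    {d : Plane} (hd : d ≠ 0) (h : wkL S A d) :
    ∃ d', ∀ x ∈ A, ∀ y ∈ S \ A, ⟪d', x⟫ < ⟪d', y⟫ := by
  by_cases hstrict : ∀ x ∈ A, ∀ y ∈ S \ A, ⟪d, x⟫ < ⟪d, y⟫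
  · exact ⟨d, hstrict⟩
  · push_neg at hstrict
    obtain ⟨x₀, hx₀, y₀, hy₀, hle⟩ := hstrict
    have htie : ⟪d, x₀⟫ = ⟪d, y₀⟫ := le_antisymm (h x₀ hx₀ y₀ hy₀) hle
    have hx₀y₀ : x₀ ≠ y₀ := fun hh => (Finset.mem_sdiff.1 hy₀).2 (hh ▸ hx₀)
    have huniq : ∀ x ∈ A, ∀ y ∈ S \ A, ⟪d, x⟫ = ⟪d, y⟫ → x = x₀ ∧ y = y₀ := by
      intro x hx y hy hxy
      have hlev : ⟪d, x⟫ = ⟪d, x₀⟫ := ties_same_level h hx hy hx₀ hy₀ hxy htie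
      constructor
      · by_contra hne
        have hxS : x ∈ S := hA hx
        have h3 : ({x, x₀, y₀} : Finset Plane) ⊆ S.filter (fun p => ⟪d, p⟫ = ⟪d, x₀⟫) := by
          intro p hp
          simp only [Finset.mem_insert, Finset.mem_singleton] at hp
          rcases hp with rfl | rfl | rfl
          · exact Finset.mem_filter.2 ⟨hxS, hlev⟩
          · exact Finset.mem_filter.2 ⟨hA hx₀, rfl⟩
          · exact Finset.mem_filter.2 ⟨(Finset.mem_sdiff.1 hy₀).1, htie.symm⟩
        have hcard3 : ({x, x₀, y₀} : Finset Plane).card = 3 := by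
          rw [Finset.card_insert_of_notMem, Finset.card_insert_of_notMem,
            Finset.card_singleton]
          · simp only [Finset.mem_singleton]
            exact hx₀y₀
          · simp only [Finset.mem_insert, Finset.mem_singleton]
            push_neg
            refine ⟨hne, fun hh => (Finset.mem_sdiff.1 hy₀).2 (hh ▸ hx)⟩
        have := (Finset.card_le_card h3).trans (level_card_le_two hgp hd _)
        omega
      · by_contra hne
        have hyS : y ∈ S := (Finset.mem_sdiff.1 hy).1
        have hlevy : ⟪d, y⟫ = ⟪d, x₀⟫ := by rw [← hxy]; exact hlev
        have h3 : ({y, x₀, y₀} : Finset Plane) ⊆ S.filter (fun p => ⟪d, p⟫ = ⟪d, x₀⟫) := by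
          intro p hp
          simp only [Finset.mem_insert, Finset.mem_singleton] at hp
          rcases hp with rfl | rfl | rfl
          · exact Finset.mem_filter.2 ⟨hyS, hlevy⟩
          · exact Finset.mem_filter.2 ⟨hA hx₀, rfl⟩
          · exact Finset.mem_filter.2 ⟨(Finset.mem_sdiff.1 hy₀).1, htie.symm⟩
        have hcard3 : ({y, x₀, y₀} : Finset Plane).card = 3 := by
          rw [Finset.card_insert_of_notMem, Finset.card_insert_of_notMem,
            Finset.card_singleton]
          · simp only [Finset.mem_singleton]
            exact hx₀y₀
          · simp only [Finset.mem_insert, Finset.mem_singleton]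
            push_neg
            refine ⟨fun hh => (Finset.mem_sdiff.1 hy).2 (hh ▸ hx₀), hne⟩
        have := (Finset.card_le_card h3).trans (level_card_le_two hgp hd _)
        omega
    set e : Plane := y₀ - x₀ with he
    set F := A ×ˢ (S \ A) with hFdef
    have hFne : F.Nonempty := ⟨(x₀, y₀), Finset.mem_product.2 ⟨hx₀, hy₀⟩⟩
    set g : Plane × Plane → ℝ := fun p =>
      if ⟪d, p.1⟫ = ⟪d, p.2⟫ then 1
      else (⟪d, p.2⟫ - ⟪d, p.1⟫) / (1 + |⟪e, p.2 - p.1⟫|) with hg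
    set ε := F.inf' hFne g with hε
    have hgpos : ∀ p ∈ F, 0 < g p := by
      intro p hp
      obtain ⟨hp1, hp2⟩ := Finset.mem_product.1 hp
      simp only [hg]
      split_ifs with htiep
      · norm_num
      · apply div_pos
        · have := h p.1 hp1 p.2 hp2
          cases this.lt_or_eq with
          | inl hlt => linarith
          | inr heq => exact absurd heq htiep
        · positivity
    have hεpos : 0 < ε := by
      rw [hε, Finset.lt_inf'_iff]
      exact hgpos
    refine ⟨d + ε • e, ?_⟩
    intro x hx y hy
    have hmem : (x, y) ∈ F := Finset.mem_product.2 ⟨hx, hy⟩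
    have hεle : ε ≤ g (x, y) := Finset.inf'_le _ hmem
    rw [inner_add_left, inner_add_left, real_inner_smul_left, real_inner_smul_left]
    by_cases htiep : ⟪d, x⟫ = ⟪d, y⟫
    · obtain ⟨hxx, hyy⟩ := huniq x hx y hy htiep
      rw [hxx, hyy]
      have hkey : ⟪e, y₀⟫ - ⟪e, x₀⟫ = ‖e‖^2 := by
        rw [he, ← inner_sub_right, ← he]
        exact real_inner_self_eq_norm_sq e
      have hene : e ≠ 0 := sub_ne_zero.2 (Ne.symm hx₀y₀)
      have hpos : 0 < ⟪e, y₀⟫ - ⟪e, x₀⟫ := by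
        rw [hkey]
        exact pow_pos (norm_pos_iff.2 hene) 2
      nlinarith [htie]
    · have hgap : 0 < ⟪d, y⟫ - ⟪d, x⟫ := by
        have := h x hx y hy
        cases this.lt_or_eq with
        | inl hlt => linarith
        | inr heq => exact absurd heq htiep
      have hgval : g (x, y) = (⟪d, y⟫ - ⟪d, x⟫) / (1 + |⟪e, y - x⟫|) := by
        simp only [hg, if_neg htiep]
      rw [hgval] at hεle
      have hden : (0:ℝ) < 1 + |⟪e, y - x⟫| := by positivity
      rw [le_div_iff₀ hden] at hεle
      have hc : ⟪e, y⟫ - ⟪e, x⟫ = ⟪e, y - x⟫ := by rw [inner_sub_right]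
      nlinarith [le_abs_self (⟪e, y - x⟫), neg_abs_le (⟪e, y - x⟫), abs_nonneg (⟪e, y - x⟫),
        mul_le_mul_of_nonneg_left (le_abs_self (⟪e, y - x⟫)) hεpos.le,
        mul_le_mul_of_nonneg_left (neg_abs_le (⟪e, y - x⟫)) hεpos.le]

lemma wkL_to_wkC {S : Finset Plane} (hgp : GenPos S) {A : Finset Plane} (hA : A ⊆ S)
    {d : Plane} (hd : d ≠ 0) (h : wkL S A d) : ∃ u, wkC S A u := by
  obtain ⟨d', hd'⟩ := wkL_strictify hgp hA hd h
  exact strict_to_wkC S hd'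

/-! ### Generic direction -/

def Generic (S : Finset Plane) (w : Plane) : Prop :=
  w ≠ 0 ∧ ∀ x ∈ S, ∀ y ∈ S, x ≠ y → ∀ c : ℝ, x - y ≠ c • w

lemma exists_generic (S : Finset Plane) : ∃ w : Plane, Generic S w := by
  classical
  set bad : Finset ℝ := (S ×ˢ S).image (fun p => (p.1 1 - p.2 1) / (p.1 0 - p.2 0)) with hbad
  obtain ⟨t, ht⟩ := Infinite.exists_notMem_finset bad
  refine ⟨mk2 1 t, ?_, ?_⟩
  · intro h
    have := congrArg (fun v : Plane => v 0) h
    simp at this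
  · intro x hx y hy hxy c hc
    have h0 : x 0 - y 0 = c := by
      have := congrArg (fun v : Plane => v 0) hc
      simpa using this
    have h1 : x 1 - y 1 = c * t := by
      have := congrArg (fun v : Plane => v 1) hc
      simpa using this
    by_cases hc0 : c = 0
    · subst hc0
      apply hxy
      apply ext2
      · nlinarith [h0]
      · nlinarith [h1]
    · apply ht
      rw [hbad]
      apply Finset.mem_image.2
      refine ⟨(x, y), Finset.mem_product.2 ⟨hx, hy⟩, ?_⟩
      simp only
      rw [h0, h1]
      field_simp
  
lemma generic_neg {S : Finset Plane} {w : Plane} (h : Generic S w) : Generic S (-w) := by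
  refine ⟨neg_ne_zero.2 h.1, ?_⟩
  intro x hx y hy hxy c hc
  exact h.2 x hx y hy hxy (-c) (by rw [hc]; rw [smul_neg, neg_smul])

lemma generic_perp {S : Finset Plane} {w : Plane} (h : Generic S w)
    {x y : Plane} (hx : x ∈ S) (hy : y ∈ S) (hxy : x ≠ y)
    {d : Plane} (hd : d ≠ 0) (hperp : ⟪d, x - y⟫ = 0) : ⟪d, w⟫ ≠ 0 := by
  intro hdw
  obtain ⟨c₁, hc₁⟩ := perp_mem hd hperp
  obtain ⟨c₂, hc₂⟩ := perp_mem hd hdw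
  have hc₂0 : c₂ ≠ 0 := by
    intro hh
    apply h.1
    rw [hc₂, hh, zero_smul]
  apply h.2 x hx y hy hxy (c₁ / c₂)
  rw [hc₁, hc₂, smul_smul]
  congr 1
  field_simp

lemma exists_both_neg {a w : Plane} (ha : a ≠ 0) (hw0 : w ≠ 0)
    (hnp : ∀ c : ℝ, a ≠ c • w) : ∃ d : Plane, ⟪d, a⟫ < 0 ∧ ⟪d, w⟫ < 0 := by
  have hdet0 : a 0 * w 1 - a 1 * w 0 ≠ 0 := by
    intro hd0
    rcases ne_zero_coord hw0 with h0 | h1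
    · apply hnp (a 0 / w 0)
      apply ext2
      · simp; field_simp
      · simp; field_simp; nlinarith [hd0]
    · apply hnp (a 1 / w 1)
      apply ext2
      · simp; field_simp; nlinarith [hd0]
      · simp; field_simp
  refine ⟨mk2 ((a 1 - w 1)/(a 0 * w 1 - a 1 * w 0)) ((w 0 - a 0)/(a 0 * w 1 - a 1 * w 0)),
    ?_, ?_⟩
  · have heq : ⟪mk2 ((a 1 - w 1)/(a 0 * w 1 - a 1 * w 0))
        ((w 0 - a 0)/(a 0 * w 1 - a 1 * w 0)), a⟫ = -1 := by
      rw [inner2]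
      simp only [mk2_zero, mk2_one]
      rw [div_mul_eq_mul_div, div_mul_eq_mul_div, ← add_div, div_eq_iff hdet0]
      ring
    rw [heq]; norm_num
  · have heq : ⟪mk2 ((a 1 - w 1)/(a 0 * w 1 - a 1 * w 0))
        ((w 0 - a 0)/(a 0 * w 1 - a 1 * w 0)), w⟫ = -1 := by
      rw [inner2]
      simp only [mk2_zero, mk2_one]
      rw [div_mul_eq_mul_div, div_mul_eq_mul_div, ← add_div, div_eq_iff hdet0]
      ring
    rw [heq]; norm_num

/-! ### Descent and tilt -/

lemma descend {S A : Finset Plane} {w v d : Plane}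
    (hv : wkC S A v)
    (hmin : ∀ u, wkC S A u → ⟪w, v⟫ ≤ ⟪w, u⟫)
    (hd : ∀ x ∈ A, ∀ y ∈ S \ A, phi v x = phi v y → ⟪d, x - y⟫ ≤ 0)
    (hdw : ⟪w, d⟫ < 0) : False := by
  set F := A ×ˢ (S \ A) with hF
  by_cases hFne : F.Nonempty
  · set g : Plane × Plane → ℝ := fun p =>
      if ⟪d, p.1 - p.2⟫ ≤ 0 then 1
      else (phi v p.2 - phi v p.1) / ⟪d, p.1 - p.2⟫ with hg
    set δ := F.inf' hFne g with hδ
    have hgpos : ∀ p ∈ F, 0 < g p := by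
      intro p hp
      obtain ⟨hp1, hp2⟩ := Finset.mem_product.1 hp
      simp only [hg]
      split_ifs with hc
      · norm_num
      · push_neg at hc
        apply div_pos _ hc
        have hle := hv p.1 hp1 p.2 hp2
        cases hle.lt_or_eq with
        | inl hlt => linarith
        | inr heq =>
          exact absurd (hd p.1 hp1 p.2 hp2 heq) (by linarith)
    have hδpos : 0 < δ := by
      rw [hδ, Finset.lt_inf'_iff]
      exact hgpos
    have hfeas : wkC S A (v + δ • d) := by
      intro x hx y hy
      have hmem : (x, y) ∈ F := Finset.mem_product.2 ⟨hx, hy⟩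
      have hδle : δ ≤ g (x, y) := Finset.inf'_le _ hmem
      rw [phi_add_smul, phi_add_smul]
      by_cases hc : ⟪d, x - y⟫ ≤ 0
      · have h1 := hv x hx y hy
        have h2 : ⟪d, x⟫ - ⟪d, y⟫ ≤ 0 := by
          rw [← inner_sub_right]; exact hc
        nlinarith
      · push_neg at hc
        have hgval : g (x, y) = (phi v y - phi v x) / ⟪d, x - y⟫ := by
          simp only [hg, if_neg (not_le.2 hc)]
        rw [hgval] at hδle
        rw [le_div_iff₀ hc] at hδle
        have h2 : ⟪d, x⟫ - ⟪d, y⟫ = ⟪d, x - y⟫ := by rw [inner_sub_right]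
        nlinarith
    have := hmin _ hfeas
    rw [inner_add_right, real_inner_smul_right] at this
    nlinarith
  · have hfeas : wkC S A (v + d) := by
      intro x hx y hy
      exact absurd ⟨(x, y), Finset.mem_product.2 ⟨hx, hy⟩⟩ hFne
    have := hmin _ hfeas
    rw [inner_add_right] at this
    linarith

lemma tilt {P Q : Finset Plane} {w d : Plane} (hw0 : w ≠ 0) (hdw : ⟪d, w⟫ = 0)
    (hstrict : ∀ x ∈ P, ∀ y ∈ Q, ⟪d, x⟫ < ⟪d, y⟫) :
    ∃ d', ⟪d', w⟫ < 0 ∧ ∀ x ∈ P, ∀ y ∈ Q, ⟪d', x⟫ < ⟪d', y⟫ := by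
  set F := P ×ˢ Q with hF
  by_cases hFne : F.Nonempty
  · set g : Plane × Plane → ℝ := fun p =>
      (⟪d, p.2⟫ - ⟪d, p.1⟫) / (1 + |⟪w, p.2 - p.1⟫|) with hg
    set ε := F.inf' hFne g with hε
    have hgpos : ∀ p ∈ F, 0 < g p := by
      intro p hp
      obtain ⟨hp1, hp2⟩ := Finset.mem_product.1 hp
      simp only [hg]
      apply div_pos
      · linarith [hstrict p.1 hp1 p.2 hp2]
      · positivity
    have hεpos : 0 < ε := by
      rw [hε, Finset.lt_inf'_iff]; exact hgpos
    refine ⟨d - ε • w, ?_, ?_⟩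
    · rw [inner_sub_left, real_inner_smul_left, hdw, real_inner_self_eq_norm_sq]
      have : 0 < ‖w‖^2 := pow_pos (norm_pos_iff.2 hw0) 2
      nlinarith
    · intro x hx y hy
      have hmem : (x, y) ∈ F := Finset.mem_product.2 ⟨hx, hy⟩
      have hεle : ε ≤ g (x, y) := Finset.inf'_le _ hmem
      have hgval : g (x, y) = (⟪d, y⟫ - ⟪d, x⟫) / (1 + |⟪w, y - x⟫|) := rfl
      rw [hgval] at hεle
      have hden : (0:ℝ) < 1 + |⟪w, y - x⟫| := by positivity
      rw [le_div_iff₀ hden] at hεle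
      rw [inner_sub_left, inner_sub_left, real_inner_smul_left, real_inner_smul_left]
      have hc : ⟪w, y⟫ - ⟪w, x⟫ = ⟪w, y - x⟫ := by rw [inner_sub_right]
      nlinarith [le_abs_self (⟪w, y - x⟫), neg_abs_le (⟪w, y - x⟫), abs_nonneg (⟪w, y - x⟫),
        mul_le_mul_of_nonneg_left (le_abs_self (⟪w, y - x⟫)) hεpos.le,
        mul_le_mul_of_nonneg_left (neg_abs_le (⟪w, y - x⟫)) hεpos.le]
  · refine ⟨-w, ?_, ?_⟩
    · rw [inner_neg_left, real_inner_self_eq_norm_sq]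
      have : 0 < ‖w‖^2 := pow_pos (norm_pos_iff.2 hw0) 2
      linarith
    · intro x hx y hy
      exact absurd ⟨(x, y), Finset.mem_product.2 ⟨hx, hy⟩⟩ hFne

/-! ### Circumcircle parameters -/

lemma card3 {x y z : Plane} (hxy : x ≠ y) (hxz : x ≠ z) (hyz : y ≠ z) :
    ({x, y, z} : Finset Plane).card = 3 := by
  rw [Finset.card_insert_of_notMem (by simp [hxy, hxz]),
    Finset.card_insert_of_notMem (by simp [hyz]), Finset.card_singleton]

lemma triple_indep {S : Finset Plane} (hgp : GenPos S) {T : Finset Plane}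
    (hT : T ⊆ S) (h3 : T.card = 3) {x y z : Plane}
    (hx : x ∈ T) (hy : y ∈ T) (hz : z ∈ T)
    (hxy : x ≠ y) (hxz : x ≠ z) (hyz : y ≠ z)
    {d : Plane} (h1 : ⟪d, y - x⟫ = 0) (h2 : ⟪d, z - x⟫ = 0) : d = 0 := by
  by_contra hd
  have hsub : ({x, y, z} : Finset Plane) ⊆ T := by
    intro p hp
    simp only [Finset.mem_insert, Finset.mem_singleton] at hp
    rcases hp with rfl | rfl | rfl <;> assumption
  have hTeq : ({x, y, z} : Finset Plane) = T :=
    Finset.eq_of_subset_of_card_le hsub (by rw [h3, card3 hxy hxz hyz])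
  apply hgp.1 T hT h3
  rw [← hTeq]
  have hco : (({x, y, z} : Finset Plane) : Set Plane) = ({x, y, z} : Set Plane) := by simp
  rw [hco]
  exact collinear_of_perp hd h1 h2

lemma det_ne_zero_of {a b : Plane} (ha : a ≠ 0)
    (h : ∀ d : Plane, ⟪d, a⟫ = 0 → ⟪d, b⟫ = 0 → d = 0) :
    a 0 * b 1 - a 1 * b 0 ≠ 0 := by
  intro h0
  have hpa : ⟪perp a, a⟫ = 0 := by rw [inner2]; simp [perp]; ring
  have hpb : ⟪perp a, b⟫ = 0 := by rw [inner2]; simp [perp]; linarith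
  exact perp_ne_zero ha (h _ hpa hpb)

lemma solve2 {a b : Plane} (hdet : a 0 * b 1 - a 1 * b 0 ≠ 0) (s₁ s₂ : ℝ) :
    ∃ v : Plane, ⟪v, a⟫ = s₁ ∧ ⟪v, b⟫ = s₂ := by
  refine ⟨mk2 ((s₁ * b 1 - s₂ * a 1)/(a 0 * b 1 - a 1 * b 0))
    ((s₂ * a 0 - s₁ * b 0)/(a 0 * b 1 - a 1 * b 0)), ?_, ?_⟩
  · rw [inner2]; simp only [mk2_zero, mk2_one]
    rw [div_mul_eq_mul_div, div_mul_eq_mul_div, ← add_div, div_eq_iff hdet]; ring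
  · rw [inner2]; simp only [mk2_zero, mk2_one]
    rw [div_mul_eq_mul_div, div_mul_eq_mul_div, ← add_div, div_eq_iff hdet]; ring

def IsCirc (T : Finset Plane) (v : Plane) (t : ℝ) : Prop := ∀ p ∈ T, phi v p = t

lemma circ_exists {S : Finset Plane} (hgp : GenPos S) {T : Finset Plane}
    (hT : T ⊆ S) (h3 : T.card = 3) : ∃ v t, IsCirc T v t := by
  obtain ⟨x, y, z, hxy, hxz, hyz, rfl⟩ := Finset.card_eq_three.1 h3
  have hxm : x ∈ ({x, y, z} : Finset Plane) := by simp
  have hym : y ∈ ({x, y, z} : Finset Plane) := by simp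
  have hzm : z ∈ ({x, y, z} : Finset Plane) := by simp
  have ha : y - x ≠ 0 := sub_ne_zero.2 (Ne.symm hxy)
  have hdet := det_ne_zero_of ha
    (fun d hd1 hd2 => by
      by_contra hd0
      exact hd0 (by
        by_contra hd0'
        exact hd0' (triple_indep hgp hT h3 hxm hym hzm hxy hxz hyz hd1 hd2)))
  obtain ⟨v, hv1, hv2⟩ := solve2 hdet (‖x‖^2 - ‖y‖^2) (‖x‖^2 - ‖z‖^2)
  refine ⟨v, phi v x, ?_⟩
  intro p hp
  simp only [Finset.mem_insert, Finset.mem_singleton] at hp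
  have e1 : ⟪v, y⟫ - ⟪v, x⟫ = ‖x‖^2 - ‖y‖^2 := by rw [← inner_sub_right]; exact hv1
  have e2 : ⟪v, z⟫ - ⟪v, x⟫ = ‖x‖^2 - ‖z‖^2 := by rw [← inner_sub_right]; exact hv2
  rcases hp with rfl | rfl | rfl
  · rfl
  · simp only [phi]; linarith
  · simp only [phi]; linarith

lemma circ_unique {S : Finset Plane} (hgp : GenPos S) {T : Finset Plane}
    (hT : T ⊆ S) (h3 : T.card = 3) {v t v' t'}
    (h : IsCirc T v t) (h' : IsCirc T v' t') : v = v' ∧ t = t' := by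
  obtain ⟨x, y, z, hxy, hxz, hyz, rfl⟩ := Finset.card_eq_three.1 h3
  have hxm : x ∈ ({x, y, z} : Finset Plane) := by simp
  have hym : y ∈ ({x, y, z} : Finset Plane) := by simp
  have hzm : z ∈ ({x, y, z} : Finset Plane) := by simp
  have e1 : ⟪v - v', y - x⟫ = 0 := by
    have a1 := h y hym; have a2 := h x hxm
    have b1 := h' y hym; have b2 := h' x hxm
    simp only [phi] at a1 a2 b1 b2
    rw [inner_sub_left, inner_sub_right, inner_sub_right]
    linarith
  have e2 : ⟪v - v', z - x⟫ = 0 := by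
    have a1 := h z hzm; have a2 := h x hxm
    have b1 := h' z hzm; have b2 := h' x hxm
    simp only [phi] at a1 a2 b1 b2
    rw [inner_sub_left, inner_sub_right, inner_sub_right]
    linarith
  have hvv : v - v' = 0 := triple_indep hgp hT h3 hxm hym hzm hxy hxz hyz e1 e2
  have hv : v = v' := sub_eq_zero.1 hvv
  refine ⟨hv, ?_⟩
  have := h x hxm
  have := h' x hxm
  rw [hv] at *
  linarith

def circC (T : Finset Plane) : Plane × ℝ :=
  if h : ∃ vt : Plane × ℝ, IsCirc T vt.1 vt.2 then h.choose else 0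

lemma circC_spec {S : Finset Plane} (hgp : GenPos S) {T : Finset Plane}
    (hT : T ⊆ S) (h3 : T.card = 3) : IsCirc T (circC T).1 (circC T).2 := by
  have hex : ∃ vt : Plane × ℝ, IsCirc T vt.1 vt.2 := by
    obtain ⟨v, t, h⟩ := circ_exists hgp hT h3
    exact ⟨(v, t), h⟩
  rw [circC, dif_pos hex]
  exact hex.choose_spec

lemma circC_eq {S : Finset Plane} (hgp : GenPos S) {T : Finset Plane}
    (hT : T ⊆ S) (h3 : T.card = 3) {v t} (h : IsCirc T v t) : circC T = (v, t) := by
  obtain ⟨h1, h2⟩ := circ_unique hgp hT h3 (circC_spec hgp hT h3) h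
  exact Prod.ext h1 h2

/-! ### Certificates -/

def insideF (S T : Finset Plane) : Finset Plane :=
  (S \ T).filter (fun q => phi (circC T).1 q < (circC T).2)

def AofT (S T T' : Finset Plane) : Finset Plane := insideF S T ∪ T'

def CertF (S : Finset Plane) (w : Plane) : Finset (Finset Plane × Finset Plane) :=
  ((S.powersetCard 3) ×ˢ S.powerset).filter
    (fun p => p.2 ⊆ p.1 ∧ p.2 ≠ ∅ ∧ p.2 ≠ p.1 ∧
      ∀ d : Plane, d ≠ 0 → (∀ x ∈ p.2, ∀ y ∈ p.1 \ p.2, ⟪d, x⟫ ≤ ⟪d, y⟫) → 0 < ⟪d, w⟫)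

lemma mem_CertF {S : Finset Plane} {w : Plane} {p : Finset Plane × Finset Plane} :
    p ∈ CertF S w ↔ p.1 ⊆ S ∧ p.1.card = 3 ∧ p.2 ⊆ p.1 ∧ p.2 ≠ ∅ ∧ p.2 ≠ p.1 ∧
      (∀ d : Plane, d ≠ 0 → (∀ x ∈ p.2, ∀ y ∈ p.1 \ p.2, ⟪d, x⟫ ≤ ⟪d, y⟫) → 0 < ⟪d, w⟫) := by
  constructor
  · intro h
    obtain ⟨hm, h1, h2, h3, h4⟩ := Finset.mem_filter.1 h
    obtain ⟨hm1, hm2⟩ := Finset.mem_product.1 hm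
    obtain ⟨hs, hc⟩ := Finset.mem_powersetCard.1 hm1
    exact ⟨hs, hc, h1, h2, h3, h4⟩
  · rintro ⟨h1, h2, h3, h4, h5, h6⟩
    exact Finset.mem_filter.2 ⟨Finset.mem_product.2
      ⟨Finset.mem_powersetCard.2 ⟨h1, h2⟩, Finset.mem_powerset.2 (h3.trans h1)⟩,
      h3, h4, h5, h6⟩

lemma off_circle {S : Finset Plane} (hgp : GenPos S) {T : Finset Plane}
    (hT : T ⊆ S) (h3 : T.card = 3) {q : Plane} (hq : q ∈ S) (hqT : q ∉ T) :
    phi (circC T).1 q ≠ (circC T).2 := by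
  intro h
  have hspec := circC_spec hgp hT h3
  have hsub : insert q T ⊆ S.filter (fun p => phi (circC T).1 p = (circC T).2) := by
    intro p hp
    rcases Finset.mem_insert.1 hp with rfl | hp
    · exact Finset.mem_filter.2 ⟨hq, h⟩
    · exact Finset.mem_filter.2 ⟨hT hp, hspec p hp⟩
  have hcard : (insert q T).card = 4 := by rw [Finset.card_insert_of_notMem hqT, h3]
  have := (Finset.card_le_card hsub).trans (circle_card_le_three hgp _ _)
  omega

lemma AofT_subset {S T T' : Finset Plane} (hT : T ⊆ S) (hT' : T' ⊆ T) :
    AofT S T T' ⊆ S := by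
  intro x hx
  rcases Finset.mem_union.1 hx with hx | hx
  · exact (Finset.mem_sdiff.1 (Finset.mem_filter.1 hx).1).1
  · exact hT (hT' hx)

lemma AofT_inter {S T T' : Finset Plane} (hT' : T' ⊆ T) : AofT S T T' ∩ T = T' := by
  ext x
  simp only [AofT, insideF, Finset.mem_inter, Finset.mem_union, Finset.mem_filter,
    Finset.mem_sdiff]
  constructor
  · rintro ⟨hx | hx, hxT⟩
    · exact absurd hxT hx.1.2
    · exact hx
  · intro hx
    exact ⟨Or.inr hx, hT' hx⟩

lemma mem_compl_AofT {S T T' : Finset Plane} (hT : T ⊆ S) (hT' : T' ⊆ T)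
    {y : Plane} (hy : y ∈ T \ T') : y ∈ S \ AofT S T T' := by
  rw [Finset.mem_sdiff] at hy ⊢
  refine ⟨hT hy.1, ?_⟩
  intro hmem
  rcases Finset.mem_union.1 hmem with hm | hm
  · exact (Finset.mem_sdiff.1 (Finset.mem_filter.1 hm).1).2 hy.1
  · exact hy.2 hm

lemma wkC_AofT {S : Finset Plane} (hgp : GenPos S) {T T' : Finset Plane}
    (hT : T ⊆ S) (h3 : T.card = 3) (hT' : T' ⊆ T) :
    wkC S (AofT S T T') (circC T).1 := by
  have hspec := circC_spec hgp hT h3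
  intro x hx y hy
  have hxle : phi (circC T).1 x ≤ (circC T).2 := by
    rcases Finset.mem_union.1 hx with hx | hx
    · exact le_of_lt (Finset.mem_filter.1 hx).2
    · exact le_of_eq (hspec x (hT' hx))
  have hyge : (circC T).2 ≤ phi (circC T).1 y := by
    rw [Finset.mem_sdiff] at hy
    by_cases hyT : y ∈ T
    · exact le_of_eq (hspec y hyT).symm
    · have hnin : y ∉ insideF S T := fun hin => hy.2 (Finset.mem_union.2 (Or.inl hin))
      have hnlt : ¬ phi (circC T).1 y < (circC T).2 := fun hlt =>
        hnin (Finset.mem_filter.2 ⟨Finset.mem_sdiff.2 ⟨hy.1, hyT⟩, hlt⟩)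
      exact le_of_not_gt hnlt
  linarith

lemma strict_min_AofT {S : Finset Plane} (hgp : GenPos S) {w : Plane}
    {T T' : Finset Plane} (hT : T ⊆ S) (h3 : T.card = 3) (hT' : T' ⊆ T)
    (hcone : ∀ d : Plane, d ≠ 0 →
      (∀ x ∈ T', ∀ y ∈ T \ T', ⟪d, x⟫ ≤ ⟪d, y⟫) → 0 < ⟪d, w⟫)
    {u : Plane} (hu : wkC S (AofT S T T') u)
    (hne : u ≠ (circC T).1) : ⟪w, (circC T).1⟫ < ⟪w, u⟫ := by
  set v := (circC T).1 with hv
  have hspec := circC_spec hgp hT h3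
  set d := u - v with hd
  have hd0 : d ≠ 0 := sub_ne_zero.2 hne
  have hprem : ∀ x ∈ T', ∀ y ∈ T \ T', ⟪d, x⟫ ≤ ⟪d, y⟫ := by
    intro x hx y hy
    have hxA : x ∈ AofT S T T' := Finset.mem_union.2 (Or.inr hx)
    have hyA : y ∈ S \ AofT S T T' := mem_compl_AofT hT hT' hy
    have h1 := hu x hxA y hyA
    have hvd : v + d = u := by rw [hd]; abel
    rw [← hvd, phi_add, phi_add] at h1
    have e1 : phi v x = (circC T).2 := hspec x (hT' hx)
    have e2 : phi v y = (circC T).2 := hspec y (Finset.mem_sdiff.1 hy).1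
    linarith
  have hpos := hcone d hd0 hprem
  have hcomm : ⟪d, w⟫ = ⟪w, d⟫ := real_inner_comm w d
  have hsub : ⟪w, u⟫ - ⟪w, v⟫ = ⟪w, d⟫ := by rw [hd, inner_sub_right]
  linarith

lemma AofT_not_b {S : Finset Plane} (hgp : GenPos S) {w : Plane}
    {T T' : Finset Plane} (hT : T ⊆ S) (h3 : T.card = 3) (hT' : T' ⊆ T)
    (hcone : ∀ d : Plane, d ≠ 0 →
      (∀ x ∈ T', ∀ y ∈ T \ T', ⟪d, x⟫ ≤ ⟪d, y⟫) → 0 < ⟪d, w⟫) :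
    ¬ ∃ d, ⟪d, w⟫ < 0 ∧ wkL S (AofT S T T') d := by
  rintro ⟨d, hdw, hdL⟩
  have hd0 : d ≠ 0 := by
    intro h
    rw [h, inner_zero_left] at hdw
    exact lt_irrefl 0 hdw
  set v := (circC T).1 with hv
  have hwk : wkC S (AofT S T T') (v + d) := by
    intro x hx y hy
    rw [phi_add, phi_add]
    have h1 := wkC_AofT hgp hT h3 hT' x hx y hy
    have h2 := hdL x hx y hy
    linarith
  have hne : v + d ≠ v := by simp [hd0]
  have hlt := strict_min_AofT hgp hT h3 hT' hcone hwk hne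
  rw [inner_add_right] at hlt
  have hcomm : ⟪w, d⟫ = ⟪d, w⟫ := real_inner_comm d w
  linarith

/-! ### Existence of a minimum -/

lemma min_exists {S : Finset Plane} {w : Plane} (hgen : Generic S w)
    {A : Finset Plane} (hA : A ⊆ S)
    (hne : ∃ u, wkC S A u)
    (hnb : ¬ ∃ d, ⟪d, w⟫ < 0 ∧ wkL S A d) :
    ∃ v, wkC S A v ∧ ∀ u, wkC S A u → ⟪w, v⟫ ≤ ⟪w, u⟫ := by
  classical
  have hw0 := hgen.1
  obtain ⟨u₀, hu₀⟩ := hne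
  set c := ⟪w, u₀⟫ with hc
  set Q : Set Plane := {u | wkC S A u ∧ ⟪w, u⟫ ≤ c} with hQ
  have hQne : Q.Nonempty := ⟨u₀, hu₀, le_refl _⟩
  have hQclosed : IsClosed Q := by
    have h1 : Q = (⋂ x ∈ (A : Set Plane), ⋂ y ∈ ((S \ A : Finset Plane) : Set Plane),
        {u : Plane | phi u x ≤ phi u y}) ∩ {u : Plane | ⟪w, u⟫ ≤ c} := by
      ext u
      simp only [hQ, Set.mem_inter_iff, Set.mem_iInter, Set.mem_setOf_eq,
        Finset.mem_coe, wkC]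
    rw [h1]
    apply IsClosed.inter
    · apply isClosed_biInter
      intro x _
      apply isClosed_biInter
      intro y _
      apply isClosed_le
      · exact (continuous_id.inner continuous_const).add continuous_const
      · exact (continuous_id.inner continuous_const).add continuous_const
    · exact isClosed_le (continuous_const.inner continuous_id) continuous_const
  have hQbdd : Bornology.IsBounded Q := by
    by_contra hb
    have hseq : ∀ k : ℕ, ∃ u, u ∈ Q ∧ (k : ℝ) + 1 ≤ ‖u‖ := by
      intro k
      by_contra hk
      push_neg at hk
      apply hb
      rw [Metric.isBounded_iff_subset_closedBall 0]
      refine ⟨(k : ℝ) + 1, ?_⟩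
      intro u hu
      rw [Metric.mem_closedBall, dist_zero_right]
      exact (hk u hu).le
    choose u huQ hunorm using hseq
    have hnormpos : ∀ k, 0 < ‖u k‖ := fun k =>
      lt_of_lt_of_le (by positivity) (hunorm k)
    set dseq : ℕ → Plane := fun k => ‖u k‖⁻¹ • u k with hdseq
    have hd1 : ∀ k, dseq k ∈ Metric.sphere (0 : Plane) 1 := by
      intro k
      rw [mem_sphere_zero_iff_norm, norm_smul, norm_inv, norm_norm]
      field_simp
      exact div_self (ne_of_gt (hnormpos k))
    obtain ⟨d, hdmem, ψ, hψmono, hψtend⟩ :=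
      (isCompact_sphere (0 : Plane) 1).tendsto_subseq hd1
    have hd0 : d ≠ 0 := by
      rw [mem_sphere_zero_iff_norm] at hdmem
      intro h
      rw [h, norm_zero] at hdmem
      norm_num at hdmem
    have htendnorm : Filter.Tendsto (fun j => ‖u (ψ j)‖⁻¹) Filter.atTop (nhds 0) := by
      apply Filter.Tendsto.inv_tendsto_atTop
      apply Filter.tendsto_atTop_mono (f := fun j : ℕ => (j : ℝ) + 1)
      · intro j
        have ha1 : j ≤ ψ j := hψmono.le_apply
        have ha2 : (j : ℝ) ≤ (ψ j : ℝ) := by exact_mod_cast ha1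
        have ha3 : (ψ j : ℝ) + 1 ≤ ‖u (ψ j)‖ := hunorm (ψ j)
        linarith
      · exact Filter.tendsto_atTop_add_const_right _ 1 tendsto_natCast_atTop_atTop
    have key : ∀ (e : Plane) (C : ℝ), (∀ k, ⟪u k, e⟫ ≤ C) → ⟪d, e⟫ ≤ 0 := by
      intro e C hC
      have h1 : ∀ j, ⟪dseq (ψ j), e⟫ ≤ ‖u (ψ j)‖⁻¹ * C := by
        intro j
        rw [hdseq]
        simp only
        rw [real_inner_smul_left]
        exact mul_le_mul_of_nonneg_left (hC _) (inv_nonneg.2 (hnormpos _).le)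
      have h2 : Filter.Tendsto (fun j => ⟪dseq (ψ j), e⟫) Filter.atTop (nhds ⟪d, e⟫) :=
        Filter.Tendsto.inner hψtend tendsto_const_nhds
      have h3 : Filter.Tendsto (fun j => ‖u (ψ j)‖⁻¹ * C) Filter.atTop (nhds 0) := by
        simpa using htendnorm.mul_const C
      exact le_of_tendsto_of_tendsto' h2 h3 h1
    have hwkL : wkL S A d := by
      intro x hx y hy
      have h0 : ⟪d, x - y⟫ ≤ 0 := by
        apply key (x - y) (‖y‖^2 - ‖x‖^2)
        intro k
        have := (huQ k).1 x hx y hy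
        simp only [phi] at this
        rw [inner_sub_right]
        linarith
      rw [inner_sub_right] at h0
      linarith
    have hdw : ⟪d, w⟫ ≤ 0 := by
      apply key w c
      intro k
      rw [real_inner_comm]
      exact (huQ k).2
    rcases lt_or_eq_of_le hdw with hlt | heq
    · exact hnb ⟨d, hlt, hwkL⟩
    · by_cases hstrict : ∀ x ∈ A, ∀ y ∈ S \ A, ⟪d, x⟫ < ⟪d, y⟫
      · obtain ⟨d', hd'w, hd'⟩ := tilt hw0 heq hstrict
        exact hnb ⟨d', hd'w, fun x hx y hy => (hd' x hx y hy).le⟩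
      · push_neg at hstrict
        obtain ⟨x, hx, y, hy, hle⟩ := hstrict
        have htie : ⟪d, x⟫ = ⟪d, y⟫ := le_antisymm (hwkL x hx y hy) hle
        have hxy : x ≠ y := fun h => (Finset.mem_sdiff.1 hy).2 (h ▸ hx)
        exact generic_perp hgen (hA hx) (Finset.mem_sdiff.1 hy).1 hxy hd0
          (by rw [inner_sub_right]; linarith) heq
  have hQcompact : IsCompact Q :=
    Metric.isCompact_of_isClosed_isBounded hQclosed hQbdd
  obtain ⟨v, hvQ, hvmin⟩ := hQcompact.exists_isMinOn
    (f := fun u : Plane => (⟪w, u⟫ : ℝ)) hQne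
    ((continuous_const.inner continuous_id).continuousOn)
  refine ⟨v, hvQ.1, ?_⟩
  intro u hu
  by_cases hcu : ⟪w, u⟫ ≤ c
  · exact isMinOn_iff.1 hvmin u ⟨hu, hcu⟩
  · push_neg at hcu
    have := isMinOn_iff.1 hvmin u₀ ⟨hu₀, le_refl _⟩
    calc ⟪w, v⟫ ≤ ⟪w, u₀⟫ := this
      _ ≤ ⟪w, u⟫ := by rw [← hc] at *; linarith

/-! ### From a minimum to a certificate -/

lemma min_to_cert {S : Finset Plane} (hgp : GenPos S) {w : Plane} (hgen : Generic S w)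
    {A : Finset Plane} (hA : A ⊆ S)
    (hnb : ¬ ∃ d, ⟪d, w⟫ < 0 ∧ wkL S A d)
    {v : Plane} (hv : wkC S A v) (hmin : ∀ u, wkC S A u → ⟪w, v⟫ ≤ ⟪w, u⟫) :
    ∃ T T', (T, T') ∈ CertF S w ∧ A = AofT S T T' := by
  classical
  have hw0 := hgen.1
  have hstep1 : ∃ x₀ ∈ A, ∃ y₀ ∈ S \ A, phi v x₀ = phi v y₀ := by
    by_contra hno
    push_neg at hno
    refine descend hv hmin (d := -w) ?_ ?_
    · intro x hx y hy htie
      exact absurd htie (hno x hx y hy)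
    · rw [inner_neg_right, real_inner_self_eq_norm_sq]
      have : 0 < ‖w‖^2 := pow_pos (norm_pos_iff.2 hw0) 2
      linarith
  obtain ⟨x₀, hx₀, y₀, hy₀, htie⟩ := hstep1
  set t := phi v x₀ with ht
  have hlevel : ∀ x ∈ A, ∀ y ∈ S \ A, phi v x = phi v y → phi v x = t ∧ phi v y = t := by
    intro x hx y hy hxy
    have h1 : phi v x = phi v x₀ := ties_same_level hv hx hy hx₀ hy₀ hxy htie
    exact ⟨h1, by rw [← hxy]; exact h1⟩
  set X := S.filter (fun p => phi v p = t) with hX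
  have hx₀X : x₀ ∈ X := Finset.mem_filter.2 ⟨hA hx₀, rfl⟩
  have hy₀X : y₀ ∈ X := Finset.mem_filter.2 ⟨(Finset.mem_sdiff.1 hy₀).1, htie.symm⟩
  have hx₀y₀ : x₀ ≠ y₀ := fun h => (Finset.mem_sdiff.1 hy₀).2 (h ▸ hx₀)
  have hXle3 : X.card ≤ 3 := circle_card_le_three hgp v t
  have hpair : ({x₀, y₀} : Finset Plane) ⊆ X := by
    intro p hp
    rcases Finset.mem_insert.1 hp with rfl | hp
    · exact hx₀X
    · rw [Finset.mem_singleton] at hp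
      subst hp
      exact hy₀X
  have hpaircard : ({x₀, y₀} : Finset Plane).card = 2 := by
    rw [Finset.card_insert_of_notMem (by simp [hx₀y₀]), Finset.card_singleton]
  have hX2le : 2 ≤ X.card := by
    calc 2 = ({x₀, y₀} : Finset Plane).card := hpaircard.symm
      _ ≤ X.card := Finset.card_le_card hpair
  have hXcard : X.card = 3 := by
    by_contra hne3
    have hX2 : X.card = 2 := by omega
    have hXeq : X = {x₀, y₀} :=
      (Finset.eq_of_subset_of_card_le hpair (by omega)).symm
    have hdiff : x₀ - y₀ ≠ 0 := sub_ne_zero.2 hx₀y₀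
    have hnp : ∀ c' : ℝ, x₀ - y₀ ≠ c' • w :=
      hgen.2 x₀ (hA hx₀) y₀ (Finset.mem_sdiff.1 hy₀).1 hx₀y₀
    obtain ⟨d, hda, hdw⟩ := exists_both_neg hdiff hw0 hnp
    refine descend hv hmin (d := d) ?_ (by rw [real_inner_comm] at hdw; exact hdw)
    intro x hx y hy hxy
    obtain ⟨hxt, hyt⟩ := hlevel x hx y hy hxy
    have hxX : x ∈ X := Finset.mem_filter.2 ⟨hA hx, hxt⟩
    have hyX : y ∈ X := Finset.mem_filter.2 ⟨(Finset.mem_sdiff.1 hy).1, hyt⟩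
    rw [hXeq] at hxX hyX
    simp only [Finset.mem_insert, Finset.mem_singleton] at hxX hyX
    have hxx : x = x₀ := by
      rcases hxX with rfl | rfl
      · rfl
      · exact absurd hx (Finset.mem_sdiff.1 hy₀).2
    have hyy : y = y₀ := by
      rcases hyX with rfl | rfl
      · exact absurd hx₀ (Finset.mem_sdiff.1 hy).2
      · rfl
    rw [hxx, hyy]
    exact hda.le
  set T' := X ∩ A with hT'
  have hT'subX : T' ⊆ X := Finset.inter_subset_left
  have hXsubS : X ⊆ S := Finset.filter_subset _ _
  have hcircX : IsCirc X v t := fun p hp => (Finset.mem_filter.1 hp).2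
  have hcC : circC X = (v, t) := circC_eq hgp hXsubS hXcard hcircX
  have hT'ne : T' ≠ ∅ := by
    intro h
    have : x₀ ∈ T' := Finset.mem_inter.2 ⟨hx₀X, hx₀⟩
    rw [h] at this
    simp at this
  have hT'neX : T' ≠ X := by
    intro h
    have : y₀ ∈ T' := h ▸ hy₀X
    exact (Finset.mem_sdiff.1 hy₀).2 (Finset.mem_inter.1 this).2
  have hAeq : A = AofT S X T' := by
    ext q
    constructor
    · intro hq
      have hqle : phi v q ≤ t := by
        have h1 := hv q hq y₀ hy₀
        have h2 : phi v y₀ = t := htie.symm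
        linarith
      rcases eq_or_lt_of_le hqle with heq' | hlt
      · exact Finset.mem_union.2 (Or.inr
          (Finset.mem_inter.2 ⟨Finset.mem_filter.2 ⟨hA hq, heq'⟩, hq⟩))
      · apply Finset.mem_union.2
        apply Or.inl
        apply Finset.mem_filter.2
        constructor
        · apply Finset.mem_sdiff.2
          refine ⟨hA hq, ?_⟩
          intro hqX
          have := (Finset.mem_filter.1 hqX).2
          linarith
        · rw [hcC]
          exact hlt
    · intro hq
      rcases Finset.mem_union.1 hq with hq | hq
      · obtain ⟨hqS, hqlt⟩ := Finset.mem_filter.1 hq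
        rw [hcC] at hqlt
        simp only at hqlt
        by_contra hqA
        have hqSA : q ∈ S \ A :=
          Finset.mem_sdiff.2 ⟨(Finset.mem_sdiff.1 hqS).1, hqA⟩
        have := hv x₀ hx₀ q hqSA
        rw [← ht] at this
        linarith
      · exact (Finset.mem_inter.1 hq).2
  have hcone : ∀ d : Plane, d ≠ 0 →
      (∀ x ∈ T', ∀ y ∈ X \ T', ⟪d, x⟫ ≤ ⟪d, y⟫) → 0 < ⟪d, w⟫ := by
    intro d hd0 hprem
    by_contra hnpos
    push_neg at hnpos
    have hdescend : ∀ d₁ : Plane, ⟪d₁, w⟫ < 0 →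
        (∀ x ∈ T', ∀ y ∈ X \ T', ⟪d₁, x⟫ ≤ ⟪d₁, y⟫) → False := by
      intro d₁ hd₁w hp₁
      refine descend hv hmin (d := d₁) ?_
        (by rw [real_inner_comm] at hd₁w; exact hd₁w)
      intro x hx y hy hxy
      obtain ⟨hxt, hyt⟩ := hlevel x hx y hy hxy
      have hxT' : x ∈ T' :=
        Finset.mem_inter.2 ⟨Finset.mem_filter.2 ⟨hA hx, hxt⟩, hx⟩
      have hyX : y ∈ X \ T' := by
        apply Finset.mem_sdiff.2
        refine ⟨Finset.mem_filter.2 ⟨(Finset.mem_sdiff.1 hy).1, hyt⟩, ?_⟩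
        intro hyT'
        exact (Finset.mem_sdiff.1 hy).2 (Finset.mem_inter.1 hyT').2
      have := hp₁ x hxT' y hyX
      rw [inner_sub_right]
      linarith
    rcases lt_or_eq_of_le hnpos with hlt | heq0
    · exact hdescend d hlt hprem
    · by_cases hstrict2 : ∀ x ∈ T', ∀ y ∈ X \ T', ⟪d, x⟫ < ⟪d, y⟫
      · obtain ⟨d', hd'w, hd'⟩ := tilt hw0 heq0 hstrict2
        exact hdescend d' hd'w (fun x hx y hy => (hd' x hx y hy).le)
      · push_neg at hstrict2
        obtain ⟨x, hx, y, hy, hle2⟩ := hstrict2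
        have htie2 : ⟪d, x⟫ = ⟪d, y⟫ := le_antisymm (hprem x hx y hy) hle2
        have hxS : x ∈ S := hXsubS (hT'subX hx)
        have hyS : y ∈ S := hXsubS (Finset.mem_sdiff.1 hy).1
        have hxyne : x ≠ y := by
          intro h
          apply (Finset.mem_sdiff.1 hy).2
          rw [← h]
          exact hx
        exact generic_perp hgen hxS hyS hxyne hd0
          (by rw [inner_sub_right]; linarith) heq0
  exact ⟨X, T', mem_CertF.2 ⟨hXsubS, hXcard, hT'subX, hT'ne, hT'neX, hcone⟩, hAeq⟩

/-! ### Counting -/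

def CF (S : Finset Plane) : Finset (Finset Plane) :=
  S.powerset.filter (fun A => ∃ u, wkC S A u)

def bSet (S : Finset Plane) (w : Plane) : Finset (Finset Plane) :=
  S.powerset.filter (fun A => ∃ d, ⟪d, w⟫ < 0 ∧ wkL S A d)

lemma bSet_subset_CF {S : Finset Plane} (hgp : GenPos S) (w : Plane) :
    bSet S w ⊆ CF S := by
  intro A hA
  obtain ⟨hpow, d, hdw, hdL⟩ := Finset.mem_filter.1 hA
  refine Finset.mem_filter.2 ⟨hpow, ?_⟩
  have hd0 : d ≠ 0 := by
    intro h
    rw [h, inner_zero_left] at hdw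
    exact lt_irrefl 0 hdw
  exact wkL_to_wkC hgp (Finset.mem_powerset.1 hpow) hd0 hdL

lemma target_eq (S : Finset Plane) (n : ℕ) (hn : S.card = n) :
    ∑ k ∈ Finset.range (n + 1), (-1 : ℤ) ^ k * (fVec S k : ℤ)
      = ∑ A ∈ CF S, (-1 : ℤ) ^ A.card := by
  have hmaps : ∀ A ∈ CF S, A.card ∈ Finset.range (n + 1) := by
    intro A hA
    rw [Finset.mem_range, Nat.lt_succ_iff, ← hn]
    exact Finset.card_le_card (Finset.mem_powerset.1 (Finset.mem_filter.1 hA).1)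
  rw [← Finset.sum_fiberwise_of_maps_to hmaps (fun A => (-1 : ℤ) ^ A.card)]
  apply Finset.sum_congr rfl
  intro k _
  have h1 : (CF S).filter (fun A => A.card = k)
      = (S.powersetCard k).filter (fun A => (VorRegion S A).Nonempty) := by
    ext A
    simp only [CF, Finset.mem_filter, Finset.mem_powerset, Finset.mem_powersetCard]
    constructor
    · rintro ⟨⟨hsub, hex⟩, hcard⟩
      exact ⟨⟨hsub, hcard⟩, (vor_nonempty_iff S A).2 hex⟩
    · rintro ⟨⟨hsub, hcard⟩, hne⟩
      exact ⟨⟨hsub, (vor_nonempty_iff S A).1 hne⟩, hcard⟩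
  have h2 : ∑ A ∈ (CF S).filter (fun A => A.card = k), (-1:ℤ)^A.card
      = ∑ A ∈ (CF S).filter (fun A => A.card = k), (-1:ℤ)^k := by
    apply Finset.sum_congr rfl
    intro A hA
    rw [(Finset.mem_filter.1 hA).2]
  rw [h2, Finset.sum_const, h1]
  rw [fVec]
  rw [nsmul_eq_mul]
  ring

lemma bSet_compl {S : Finset Plane} {w : Plane} {A : Finset Plane} (h : A ∈ bSet S w) :
    S \ A ∈ bSet S (-w) := by
  obtain ⟨hpow, d, hdw, hdL⟩ := Finset.mem_filter.1 h
  refine Finset.mem_filter.2 ⟨Finset.mem_powerset.2 (Finset.sdiff_subset), -d, ?_, ?_⟩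
  · rw [inner_neg_neg]
    exact hdw
  · intro x hx y hy
    have hyA : y ∈ A := by
      obtain ⟨hyS, hyn⟩ := Finset.mem_sdiff.1 hy
      by_contra hyA
      exact hyn (Finset.mem_sdiff.2 ⟨hyS, hyA⟩)
    have := hdL y hyA x (by
      rw [Finset.mem_sdiff]
      obtain ⟨hxS, _⟩ := Finset.mem_sdiff.1 hx
      exact ⟨hxS, (Finset.mem_sdiff.1 hx).2⟩)
    rw [inner_neg_left, inner_neg_left]
    linarith

lemma parity_cancel {n k : ℕ} (hodd : Odd n) (hk : k ≤ n) :
    (-1 : ℤ) ^ k + (-1 : ℤ) ^ (n - k) = 0 := by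
  rcases Nat.even_or_odd k with he | ho
  · rw [he.neg_one_pow, (Nat.Odd.sub_even hk hodd he).neg_one_pow]
    ring
  · rw [ho.neg_one_pow, (Nat.Odd.sub_odd hodd ho).neg_one_pow]
    ring

lemma bSum {S : Finset Plane} {w : Plane} {n : ℕ} (hn : S.card = n) (hodd : Odd n) :
    ∑ A ∈ bSet S w, (-1 : ℤ) ^ A.card + ∑ A ∈ bSet S (-w), (-1 : ℤ) ^ A.card = 0 := by
  have hbij : ∑ A ∈ bSet S (-w), (-1 : ℤ) ^ A.card
      = ∑ A ∈ bSet S w, (-1 : ℤ) ^ (S \ A).card := by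
    apply Finset.sum_nbij' (i := fun A => S \ A) (j := fun A => S \ A)
    · intro A hA
      have := bSet_compl (w := -w) hA
      rwa [neg_neg] at this
    · intro A hA
      exact bSet_compl hA
    · intro A hA
      exact Finset.sdiff_sdiff_eq_self
        (Finset.mem_powerset.1 (Finset.mem_filter.1 hA).1)
    · intro A hA
      exact Finset.sdiff_sdiff_eq_self
        (Finset.mem_powerset.1 (Finset.mem_filter.1 hA).1)
    · intro A hA
      rw [Finset.sdiff_sdiff_eq_self (Finset.mem_powerset.1 (Finset.mem_filter.1 hA).1)]
  rw [hbij, ← Finset.sum_add_distrib]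
  apply Finset.sum_eq_zero
  intro A hA
  have hsub : A ⊆ S := Finset.mem_powerset.1 (Finset.mem_filter.1 hA).1
  rw [Finset.card_sdiff_of_subset hsub, hn]
  exact parity_cancel hodd (by rw [← hn]; exact Finset.card_le_card hsub)

lemma Xsum_eq {S : Finset Plane} (hgp : GenPos S) {w : Plane} (hgen : Generic S w) :
    ∑ A ∈ CF S \ bSet S w, (-1 : ℤ) ^ A.card
      = ∑ p ∈ CertF S w, (-1 : ℤ) ^ (AofT S p.1 p.2).card := by
  symm
  apply Finset.sum_bij (i := fun p _ => AofT S p.1 p.2)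
  · intro p hp
    obtain ⟨h1, h2, h3, h4, h5, h6⟩ := mem_CertF.1 hp
    have hAs := AofT_subset (S := S) h1 h3
    apply Finset.mem_sdiff.2
    constructor
    · exact Finset.mem_filter.2 ⟨Finset.mem_powerset.2 hAs,
        ⟨(circC p.1).1, wkC_AofT hgp h1 h2 h3⟩⟩
    · intro hb
      obtain ⟨_, hex⟩ := Finset.mem_filter.1 hb
      exact AofT_not_b hgp h1 h2 h3 h6 hex
  · intro p hp q hq heq
    obtain ⟨p1, p2, p3, p4, p5, p6⟩ := mem_CertF.1 hp
    obtain ⟨q1, q2, q3, q4, q5, q6⟩ := mem_CertF.1 hq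
    have hwkp := wkC_AofT hgp p1 p2 p3
    have hwkq := wkC_AofT hgp q1 q2 q3
    have hwkq' : wkC S (AofT S p.1 p.2) (circC q.1).1 := by
      rw [heq]
      exact hwkq
    have hwkp' : wkC S (AofT S q.1 q.2) (circC p.1).1 := by
      rw [← heq]
      exact hwkp
    have hveq : (circC p.1).1 = (circC q.1).1 := by
      by_contra hne
      have l1 := strict_min_AofT hgp p1 p2 p3 p6 hwkq' (Ne.symm hne)
      have l2 := strict_min_AofT hgp q1 q2 q3 q6 hwkp' hne
      linarith
    obtain ⟨x, hx⟩ := Finset.nonempty_iff_ne_empty.2 p4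
    obtain ⟨y, hy⟩ := Finset.sdiff_nonempty.2 (fun hsub => q5 (le_antisymm q3 hsub))
    obtain ⟨x', hx'⟩ := Finset.nonempty_iff_ne_empty.2 q4
    obtain ⟨y', hy'⟩ := Finset.sdiff_nonempty.2 (fun hsub => p5 (le_antisymm p3 hsub))
    have hspecp := circC_spec hgp p1 p2
    have hspecq := circC_spec hgp q1 q2
    have hteq : (circC p.1).2 = (circC q.1).2 := by
      have e1 : phi (circC p.1).1 x = (circC p.1).2 := hspecp x (p3 hx)
      have e2 : phi (circC q.1).1 y = (circC q.1).2 := hspecq y (Finset.mem_sdiff.1 hy).1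
      have e3 : phi (circC q.1).1 x' = (circC q.1).2 := hspecq x' (q3 hx')
      have e4 : phi (circC p.1).1 y' = (circC p.1).2 := hspecp y' (Finset.mem_sdiff.1 hy').1
      have m1 : x ∈ AofT S p.1 p.2 := Finset.mem_union.2 (Or.inr hx)
      have m2 : y ∈ S \ AofT S p.1 p.2 := by
        rw [heq]
        exact mem_compl_AofT q1 q3 hy
      have le1 := hwkp x m1 y m2
      rw [e1, hveq, e2] at le1
      have m3 : x' ∈ AofT S p.1 p.2 := by
        rw [heq]
        exact Finset.mem_union.2 (Or.inr hx')
      have m4 : y' ∈ S \ AofT S p.1 p.2 := mem_compl_AofT p1 p3 hy'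
      have le2 := hwkp x' m3 y' m4
      rw [e4] at le2
      rw [hveq, e3] at le2
      exact le_antisymm le1 le2
    have hTeq : p.1 = q.1 := by
      have hsubp : p.1 ⊆ S.filter (fun r => phi (circC p.1).1 r = (circC p.1).2) :=
        fun r hr => Finset.mem_filter.2 ⟨p1 hr, hspecp r hr⟩
      have hsubq : q.1 ⊆ S.filter (fun r => phi (circC p.1).1 r = (circC p.1).2) := by
        intro r hr
        refine Finset.mem_filter.2 ⟨q1 hr, ?_⟩
        rw [hveq, hteq]
        exact hspecq r hr
      have hcle := circle_card_le_three hgp (circC p.1).1 (circC p.1).2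
      have hp1 := Finset.eq_of_subset_of_card_le hsubp (by omega)
      have hq1 := Finset.eq_of_subset_of_card_le hsubq (by omega)
      rw [hp1, hq1]
    have hT'p : p.2 = AofT S p.1 p.2 ∩ p.1 := (AofT_inter p3).symm
    have hT'q : q.2 = AofT S q.1 q.2 ∩ q.1 := (AofT_inter q3).symm
    have hT'eq : p.2 = q.2 := by
      rw [hT'p, hT'q, heq, hTeq]
    exact Prod.ext hTeq hT'eq
  · intro A hA
    obtain ⟨hACF, hAnb⟩ := Finset.mem_sdiff.1 hA
    obtain ⟨hpow, hex⟩ := Finset.mem_filter.1 hACF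
    have hAs : A ⊆ S := Finset.mem_powerset.1 hpow
    have hnb : ¬ ∃ d, ⟪d, w⟫ < 0 ∧ wkL S A d := by
      intro hd
      exact hAnb (Finset.mem_filter.2 ⟨hpow, hd⟩)
    obtain ⟨v, hv, hmin⟩ := min_exists hgen hAs hex hnb
    obtain ⟨T, T', hcert, hAeq⟩ := min_to_cert hgp hgen hAs hnb hv hmin
    exact ⟨(T, T'), hcert, hAeq.symm⟩
  · intro p hp
    rfl

lemma card_AofT {S T T' : Finset Plane} (hT' : T' ⊆ T) :
    (AofT S T T').card = (insideF S T).card + T'.card := by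
  apply Finset.card_union_of_disjoint
  apply Finset.disjoint_left.2
  intro a ha ha'
  exact (Finset.mem_sdiff.1 (Finset.mem_filter.1 ha).1).2 (hT' ha')

lemma CertF_neg_sum {S : Finset Plane} (w : Plane) :
    ∑ p ∈ CertF S (-w), (-1 : ℤ) ^ (AofT S p.1 p.2).card
      = - ∑ p ∈ CertF S w, (-1 : ℤ) ^ (AofT S p.1 p.2).card := by
  rw [← Finset.sum_neg_distrib]
  have hmaps : ∀ (w0 : Plane) (p : Finset Plane × Finset Plane),
      p ∈ CertF S w0 → (p.1, p.1 \ p.2) ∈ CertF S (-w0) := by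
    intro w0 p hp
    obtain ⟨h1, h2, h3, h4, h5, h6⟩ := mem_CertF.1 hp
    refine mem_CertF.2 ⟨h1, h2, Finset.sdiff_subset, ?_, ?_, ?_⟩
    · show p.1 \ p.2 ≠ ∅
      rw [← Finset.nonempty_iff_ne_empty]
      exact Finset.sdiff_nonempty.2 (fun hsub => h5 (le_antisymm h3 hsub))
    · show p.1 \ p.2 ≠ p.1
      intro heq
      obtain ⟨x, hx⟩ := Finset.nonempty_iff_ne_empty.2 h4
      have hx1 : x ∈ p.1 := h3 hx
      rw [← heq] at hx1
      exact (Finset.mem_sdiff.1 hx1).2 hx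
    · show ∀ d : Plane, d ≠ 0 →
        (∀ x ∈ p.1 \ p.2, ∀ y ∈ p.1 \ (p.1 \ p.2), ⟪d, x⟫ ≤ ⟪d, y⟫) → 0 < ⟪d, -w0⟫
      intro d hd0 hprem
      have hprem' : ∀ x ∈ p.2, ∀ y ∈ p.1 \ p.2, ⟪-d, x⟫ ≤ ⟪-d, y⟫ := by
        intro x hx y hy
        have hx' : x ∈ p.1 \ (p.1 \ p.2) := by
          rw [Finset.sdiff_sdiff_self_left, Finset.inter_eq_right.2 h3]
          exact hx
        have := hprem y hy x hx'
        rw [inner_neg_left, inner_neg_left]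
        linarith
      have hfin := h6 (-d) (neg_ne_zero.2 hd0) hprem'
      rw [inner_neg_left] at hfin
      rw [inner_neg_right]
      exact hfin
  apply Finset.sum_nbij' (i := fun p => (p.1, p.1 \ p.2)) (j := fun p => (p.1, p.1 \ p.2))
  · intro p hp
    have := hmaps (-w) p hp
    rwa [neg_neg] at this
  · intro p hp
    exact hmaps w p hp
  · intro p hp
    obtain ⟨h1, h2, h3, h4, h5, h6⟩ := mem_CertF.1 hp
    have : p.1 \ (p.1 \ p.2) = p.2 := by
      rw [Finset.sdiff_sdiff_self_left, Finset.inter_eq_right.2 h3]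
    simp only [this]
  · intro p hp
    obtain ⟨h1, h2, h3, h4, h5, h6⟩ := mem_CertF.1 hp
    have : p.1 \ (p.1 \ p.2) = p.2 := by
      rw [Finset.sdiff_sdiff_self_left, Finset.inter_eq_right.2 h3]
    simp only [this]
  · intro p hp
    obtain ⟨h1, h2, h3, h4, h5, h6⟩ := mem_CertF.1 hp
    have hc1 : 1 ≤ p.2.card := by
      obtain ⟨x, hx⟩ := Finset.nonempty_iff_ne_empty.2 h4
      exact Finset.card_pos.2 ⟨x, hx⟩
    have hc2 : p.2.card < 3 := by
      rw [← h2]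
      exact Finset.card_lt_card (lt_of_le_of_ne h3 h5)
    have hcs : (p.1 \ p.2).card = 3 - p.2.card := by
      rw [Finset.card_sdiff_of_subset h3, h2]
    rw [card_AofT h3, card_AofT Finset.sdiff_subset, hcs]
    set i := (insideF S p.1).card
    set cc := p.2.card
    interval_cases cc
    · norm_num [pow_add, pow_succ]
    · norm_num [pow_add, pow_succ]

lemma main_aux {S : Finset Plane} (hgp : GenPos S) {n : ℕ} (hn : S.card = n)
    (hodd : Odd n) : ∑ A ∈ CF S, (-1 : ℤ) ^ A.card = 0 := by
  obtain ⟨w, hw⟩ := exists_generic S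
  have hw' := generic_neg hw
  have hsplit : ∀ w0 : Plane, Generic S w0 →
      ∑ A ∈ CF S, (-1 : ℤ) ^ A.card
        = ∑ A ∈ bSet S w0, (-1 : ℤ) ^ A.card
          + ∑ A ∈ CF S \ bSet S w0, (-1 : ℤ) ^ A.card := by
    intro w0 _
    rw [← Finset.sum_sdiff (bSet_subset_CF hgp w0)]
    ring
  have e1 := hsplit w hw
  have e2 := hsplit (-w) hw'
  have e3 := bSum (w := w) hn hodd
  have e4 : ∑ A ∈ CF S \ bSet S w, (-1 : ℤ) ^ A.card
      + ∑ A ∈ CF S \ bSet S (-w), (-1 : ℤ) ^ A.card = 0 := by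
    rw [Xsum_eq hgp hw, Xsum_eq hgp hw', CertF_neg_sum (S := S) w]
    ring
  linarith

end VorAux

/-- For `n` odd, the reduced Euler characteristic of the Voronoi poset
vanishes: `∑_{k=0}^{n} (-1)^k f_k = 0` (with `f_0 = 1`). -/
theorem euler_char_zero_of_odd (S : Finset Plane) (n : ℕ) (hn : S.card = n)
    (hn3 : 3 ≤ n) (hodd : Odd n) (hgp : GenPos S) :
    ∑ k ∈ Finset.range (n + 1), (-1 : ℤ) ^ k * (fVec S k : ℤ) = 0 := by
  rw [VorAux.target_eq S n hn]
  exact VorAux.main_aux hgp hn hodd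
end
end

section
/- Let S be a set of n ≥ 3 points in the Euclidean plane in general position. Then the total number of unbounded Voronoi regions over all orders 1 through n−1 satisfies ∑_{k=1}^{n−1} f_k^∞ = n(n−1). -/
open scoped Classical RealInnerProductSpace

noncomputable section

namespace VorAux


def dotp (x y : Plane) : ℝ := x 0 * y 0 + x 1 * y 1

def Jr (z : Plane) : Plane := !₂[-z 1, z 0]

@[simp] lemma pl_sub_apply (x y : Plane) (i : Fin 2) : (x - y) i = x i - y i := rfl
@[simp] lemma pl_add_apply (x y : Plane) (i : Fin 2) : (x + y) i = x i + y i := rfl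
@[simp] lemma pl_smul_apply (t : ℝ) (x : Plane) (i : Fin 2) : (t • x) i = t * x i := rfl
@[simp] lemma Jr_apply_zero (z : Plane) : Jr z 0 = -z 1 := rfl
@[simp] lemma Jr_apply_one (z : Plane) : Jr z 1 = z 0 := rfl

lemma coord_ne (w : Plane) (h : w ≠ 0) : w 0 ≠ 0 ∨ w 1 ≠ 0 := by
  by_contra hc
  push_neg at hc
  exact h (PiLp.ext fun i => by fin_cases i <;> simp [hc.1, hc.2])

lemma dotp_comm (x y : Plane) : dotp x y = dotp y x := by unfold dotp; ring
lemma dotp_sub_right (u a b : Plane) : dotp u (a - b) = dotp u a - dotp u b := by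
  simp [dotp]; ring
lemma dotp_add_right (u a b : Plane) : dotp u (a + b) = dotp u a + dotp u b := by
  simp [dotp]; ring
lemma dotp_smul_left (t : ℝ) (u d : Plane) : dotp (t • u) d = t * dotp u d := by
  simp [dotp]; ring
lemma dotp_smul_right (t : ℝ) (u d : Plane) : dotp u (t • d) = t * dotp u d := by
  simp [dotp]; ring
lemma dotp_self_pos (z : Plane) (hz : z ≠ 0) : 0 < dotp z z := by
  rcases coord_ne z hz with h | h <;>
    · unfold dotp; nlinarith [mul_self_pos.mpr h, mul_self_nonneg (z 0), mul_self_nonneg (z 1)]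
lemma dotp_Jr_self (z : Plane) : dotp (Jr z) z = 0 := by simp [dotp]; ring
lemma dotp_Jr_antisymm (a b : Plane) : dotp (Jr a) b = - dotp (Jr b) a := by
  simp [dotp]; ring
lemma Jr_ne_zero (z : Plane) (hz : z ≠ 0) : Jr z ≠ 0 := by
  intro h
  apply hz
  have h0 : Jr z 0 = 0 := by rw [h]; rfl
  have h1 : Jr z 1 = 0 := by rw [h]; rfl
  simp at h0 h1
  exact PiLp.ext fun i => by fin_cases i <;> simp [h0, h1]
lemma ratio_identity (u d₀ d : Plane) :
    dotp (Jr d₀) d * dotp u u = dotp u d₀ * dotp (Jr u) d - dotp (Jr u) d₀ * dotp u d := by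
  simp [dotp]; ring

lemma dotp_eq_inner (x y : Plane) : dotp x y = (inner ℝ x y : ℝ) := by
  simp [dotp, PiLp.inner_apply, Fin.sum_univ_two, RCLike.inner_apply]; ring

lemma dist_sq (x y : Plane) : dist x y = Real.sqrt ((x 0 - y 0)^2 + (x 1 - y 1)^2) := by
  rw [EuclideanSpace.dist_eq]; simp [Fin.sum_univ_two, Real.dist_eq, sq_abs]

lemma dist_le_dist_iff (p x y : Plane) :
    dist p x ≤ dist p y ↔ dotp x x - dotp y y ≤ 2 * dotp p (x - y) := by
  rw [dist_sq, dist_sq, Real.sqrt_le_sqrt_iff (by positivity)]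
  unfold dotp
  simp only [pl_sub_apply]
  constructor <;> intro h <;> nlinarith [h]

lemma collinear_of_dotp (w : Plane) (hw : w ≠ 0) (a b c : Plane)
    (hab : dotp w a = dotp w b) (hac : dotp w a = dotp w c) :
    Collinear ℝ ({a, b, c} : Set Plane) := by
  have key : ∀ z : Plane, dotp w a = dotp w z → ∃ t : ℝ, z = t • Jr w + a := by
    intro z hz
    have hrel : w 0 * (z 0 - a 0) + w 1 * (z 1 - a 1) = 0 := by
      unfold dotp at hz; linarith
    rcases coord_ne w hw with h | h
    · refine ⟨(z 1 - a 1) / w 0, PiLp.ext fun i => ?_⟩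
      fin_cases i <;> simp <;> field_simp <;> linarith
    · refine ⟨-(z 0 - a 0) / w 1, PiLp.ext fun i => ?_⟩
      fin_cases i <;> simp <;> field_simp <;> linarith
  rw [collinear_iff_of_mem (show a ∈ ({a, b, c} : Set Plane) by simp)]
  refine ⟨Jr w, fun p hp => ?_⟩
  simp only [Set.mem_insert_iff, Set.mem_singleton_iff] at hp
  rcases hp with rfl | rfl | rfl
  · exact ⟨0, by simp⟩
  · exact key p hab
  · exact key p hac


/-- Strict linear separation of `A` from `S \ A` in direction `u`. -/
def SepD (S A : Finset Plane) (u : Plane) : Prop :=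
  ∀ x ∈ A, ∀ y ∈ S \ A, 0 < dotp u (x - y)

/-- three distinct points of S at a common level contradict general position -/
lemma genpos_level (S : Finset Plane) (hgp : GenPos S) (w : Plane) (hw : w ≠ 0)
    (a b c : Plane) (ha : a ∈ S) (hb : b ∈ S) (hc : c ∈ S)
    (hab : a ≠ b) (hac : a ≠ c) (hbc : b ≠ c)
    (lab : dotp w a = dotp w b) (lac : dotp w a = dotp w c) : False := by
  refine hgp.1 {a, b, c} ?_ ?_ ?_
  · intro x hx
    simp only [Finset.mem_insert, Finset.mem_singleton] at hx
    rcases hx with rfl | rfl | rfl <;> assumption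
  · rw [Finset.card_eq_three]; exact ⟨a, b, c, hab, hac, hbc, rfl⟩
  · have : (({a, b, c} : Finset Plane) : Set Plane) = ({a, b, c} : Set Plane) := by simp
    rw [this]
    exact collinear_of_dotp w hw a b c lab lac

lemma unbounded_of_sep (S A : Finset Plane) (hA : A.Nonempty) (u : Plane) (hu : u ≠ 0)
    (h : SepD S A u) :
    (VorRegion S A).Nonempty ∧ ¬ Bornology.IsBounded (VorRegion S A) := by
  obtain ⟨T, hT⟩ := Finset.exists_le
    ((A ×ˢ (S \ A)).image fun z => (dotp z.1 z.1 - dotp z.2 z.2) / (2 * dotp u (z.1 - z.2)))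
  have key : ∀ t : ℝ, T ≤ t → t • u ∈ VorRegion S A := by
    intro t ht x hx y hy
    rw [dist_le_dist_iff, dotp_smul_left]
    have h1 : 0 < dotp u (x - y) := h x hx y hy
    have h2 : (dotp x x - dotp y y) / (2 * dotp u (x - y)) ≤ t := by
      refine le_trans (hT _ ?_) ht
      exact Finset.mem_image.2 ⟨(x, y), Finset.mem_product.2 ⟨hx, hy⟩, rfl⟩
    rw [div_le_iff₀ (by positivity)] at h2
    linarith
  constructor
  · exact ⟨T • u, key T le_rfl⟩
  · intro hb
    rw [isBounded_iff_forall_norm_le] at hb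
    obtain ⟨C, hC⟩ := hb
    have hu' : 0 < ‖u‖ := norm_pos_iff.2 hu
    set t := max T ((C + 1) / ‖u‖) with htdef
    have h1 := hC _ (key t (le_max_left _ _))
    have h2 : (C + 1) / ‖u‖ ≤ |t| := le_trans (le_max_right _ _) (le_abs_self t)
    rw [div_le_iff₀ hu'] at h2
    rw [norm_smul, Real.norm_eq_abs] at h1
    linarith

lemma tiebreak (S A : Finset Plane) (w : Plane) (hw : w ≠ 0) (x₀ y₀ : Plane)
    (hd0 : dotp w (x₀ - y₀) = 0) (hne : x₀ ≠ y₀)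
    (hstrict : ∀ x ∈ A, ∀ y ∈ S \ A, (x, y) ≠ (x₀, y₀) → 0 < dotp w (x - y)) :
    ∃ u : Plane, u ≠ 0 ∧ SepD S A u := by
  set d₀ := x₀ - y₀ with hd₀def
  have hd₀ : 0 < dotp d₀ d₀ := dotp_self_pos _ (sub_ne_zero.2 hne)
  obtain ⟨ε, hεpos, hεsmall⟩ : ∃ ε : ℝ, 0 < ε ∧
      ∀ x ∈ A, ∀ y ∈ S \ A, (x, y) ≠ (x₀, y₀) → |ε * dotp d₀ (x - y)| < dotp w (x - y) := by
    set F := (A ×ˢ (S \ A)).filter (fun z => z ≠ (x₀, y₀)) with hF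
    by_cases hFn : F.Nonempty
    · refine ⟨F.inf' hFn (fun z => dotp w (z.1 - z.2) / (2 * (|dotp d₀ (z.1 - z.2)| + 1))),
        ?_, ?_⟩
      · rw [Finset.lt_inf'_iff]
        intro z hz
        have hzm := Finset.mem_filter.1 hz
        have := hstrict z.1 (Finset.mem_product.1 hzm.1).1 z.2 (Finset.mem_product.1 hzm.1).2
          (by simpa using hzm.2)
        positivity
      · intro x hx y hy hxy
        have hmem : (x, y) ∈ F := Finset.mem_filter.2 ⟨Finset.mem_product.2 ⟨hx, hy⟩, by simpa using hxy⟩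
        have hle := Finset.inf'_le (fun z => dotp w (z.1 - z.2) / (2 * (|dotp d₀ (z.1 - z.2)| + 1))) hmem
        have hpos := hstrict x hx y hy hxy
        set ε := F.inf' hFn (fun z => dotp w (z.1 - z.2) / (2 * (|dotp d₀ (z.1 - z.2)| + 1)))
        have hεp : 0 < ε := by
          rw [Finset.lt_inf'_iff]
          intro z hz
          have hzm := Finset.mem_filter.1 hz
          have := hstrict z.1 (Finset.mem_product.1 hzm.1).1 z.2 (Finset.mem_product.1 hzm.1).2
            (by simpa using hzm.2)
          positivity
        simp only at hle
        have hB : 0 ≤ |dotp d₀ (x - y)| := abs_nonneg _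
        rw [abs_mul, abs_of_pos hεp]
        calc ε * |dotp d₀ (x - y)|
            ≤ dotp w (x - y) / (2 * (|dotp d₀ (x - y)| + 1)) * |dotp d₀ (x - y)| := by
              apply mul_le_mul_of_nonneg_right hle hB
          _ < dotp w (x - y) := by
              rw [div_mul_eq_mul_div, div_lt_iff₀ (by positivity)]
              nlinarith
    · refine ⟨1, one_pos, fun x hx y hy hxy => absurd ?_ hFn⟩
      exact ⟨(x, y), Finset.mem_filter.2 ⟨Finset.mem_product.2 ⟨hx, hy⟩, hxy⟩⟩
  refine ⟨w + ε • d₀, ?_, ?_⟩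
  · intro h0
    have hz : dotp w (0 : Plane) = 0 := by
      rw [← sub_self w, dotp_sub_right]; ring
    have h1 : dotp w (w + ε • d₀) = dotp w w + ε * dotp w d₀ := by
      rw [dotp_add_right, dotp_smul_right]
    have h2 : dotp w d₀ = 0 := hd0
    have h3 : 0 < dotp w w := dotp_self_pos w hw
    rw [h0, hz, h2, mul_zero] at h1
    linarith
  · intro x hx y hy
    by_cases hxy : (x, y) = (x₀, y₀)
    · obtain ⟨rfl, rfl⟩ := Prod.mk.inj hxy
      rw [dotp_comm, dotp_add_right, dotp_comm _ w, dotp_comm _ (ε • d₀), dotp_smul_left, ← hd₀def,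
        hd0]
      nlinarith
    · have h1 := hεsmall x hx y hy hxy
      have h2 := hstrict x hx y hy hxy
      rw [dotp_comm, dotp_add_right, dotp_comm _ w, dotp_comm _ (ε • d₀), dotp_smul_left]
      have := neg_abs_le (ε * dotp d₀ (x - y))
      linarith


open Filter in
lemma sep_of_unbounded (S A : Finset Plane) (hgp : GenPos S) (hAS : A ⊆ S)
    (hnb : ¬ Bornology.IsBounded (VorRegion S A)) :
    ∃ u : Plane, u ≠ 0 ∧ SepD S A u := by
  have hseq : ∀ n : ℕ, ∃ p : Plane, p ∈ VorRegion S A ∧ (n : ℝ) < ‖p‖ := by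
    intro n
    by_contra hc
    push_neg at hc
    exact hnb (isBounded_iff_forall_norm_le.2 ⟨n, fun x hx => hc x hx⟩)
  choose p hpV hpn using hseq
  have hppos : ∀ n, 0 < ‖p n‖ := fun n => lt_of_le_of_lt (Nat.cast_nonneg n) (hpn n)
  set v : ℕ → Plane := fun n => ‖p n‖⁻¹ • p n with hv
  have hvs : ∀ n, v n ∈ Metric.sphere (0 : Plane) 1 := by
    intro n
    simp only [Metric.mem_sphere, dist_zero_right, hv, norm_smul, norm_inv, norm_norm]
    exact inv_mul_cancel₀ (hppos n).ne'
  obtain ⟨u, hus, φ, hφ, hconv⟩ := (isCompact_sphere (0 : Plane) 1).tendsto_subseq hvs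
  have hu : u ≠ 0 := by
    intro h; rw [h] at hus; simp at hus
  have weak : ∀ x ∈ A, ∀ y ∈ S \ A, 0 ≤ dotp u (x - y) := by
    intro x hx y hy
    by_contra hneg
    push_neg at hneg
    have hcont : Tendsto (fun k => dotp (v (φ k)) (x - y)) atTop (nhds (dotp u (x - y))) := by
      have hc : Continuous fun z : Plane => dotp z (x - y) := by
        simp only [dotp_eq_inner]
        exact continuous_id.inner continuous_const
      exact (hc.tendsto u).comp hconv
    set d := dotp u (x - y) with hd
    set B := dotp x x - dotp y y with hB
    have hev : ∀ᶠ k in atTop, dotp (v (φ k)) (x - y) < d / 2 :=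
      hcont.eventually_lt_const (by linarith)
    obtain ⟨k₀, hk₀⟩ := eventually_atTop.1 hev
    obtain ⟨k₁, hk₁⟩ : ∃ k₁ : ℕ, (B / 2) / (d / 2) < (k₁ : ℝ) := exists_nat_gt _
    set k := max k₀ k₁ with hk
    have hd2 : d / 2 < 0 := by linarith
    have h1 : B ≤ 2 * dotp (p (φ k)) (x - y) := (dist_le_dist_iff _ _ _).1 (hpV (φ k) x hx y hy)
    have h2 : ‖p (φ k)‖ * dotp (v (φ k)) (x - y) = dotp (p (φ k)) (x - y) := by
      rw [show v (φ k) = ‖p (φ k)‖⁻¹ • p (φ k) from rfl, dotp_smul_left, ← mul_assoc,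
        mul_inv_cancel₀ (hppos _).ne', one_mul]
    have h3 : dotp (v (φ k)) (x - y) < d / 2 := hk₀ k (le_max_left _ _)
    have h4 : (k₁ : ℝ) ≤ ‖p (φ k)‖ := by
      calc (k₁ : ℝ) ≤ (k : ℝ) := by exact_mod_cast le_max_right _ _
        _ ≤ (φ k : ℝ) := by exact_mod_cast hφ.le_apply
        _ ≤ ‖p (φ k)‖ := (hpn _).le
    have h5 : dotp (p (φ k)) (x - y) ≤ ‖p (φ k)‖ * (d / 2) := by
      rw [← h2]; exact mul_le_mul_of_nonneg_left h3.le (norm_nonneg _)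
    have h6 : ‖p (φ k)‖ * (d / 2) ≤ (k₁ : ℝ) * (d / 2) :=
      mul_le_mul_of_nonpos_right h4 hd2.le
    have h7 : (k₁ : ℝ) * (d / 2) < B / 2 := (div_lt_iff_of_neg hd2).1 hk₁
    linarith
  by_cases htie : ∃ x ∈ A, ∃ y ∈ S \ A, dotp u (x - y) = 0
  · obtain ⟨x₀, hx₀, y₀, hy₀, htz⟩ := htie
    have hy₀S : y₀ ∈ S := (Finset.mem_sdiff.1 hy₀).1
    have hy₀A : y₀ ∉ A := (Finset.mem_sdiff.1 hy₀).2
    have hx₀y₀ : x₀ ≠ y₀ := fun h => hy₀A (h ▸ hx₀)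
    have huniq : ∀ x ∈ A, ∀ y ∈ S \ A, dotp u (x - y) = 0 → x = x₀ ∧ y = y₀ := by
      intro x hx y hy hz
      have e1 : dotp u x = dotp u y := by rw [dotp_sub_right] at hz; linarith
      have e0 : dotp u x₀ = dotp u y₀ := by rw [dotp_sub_right] at htz; linarith
      have w1 : dotp u y₀ ≤ dotp u x := by
        have := weak x hx y₀ hy₀; rw [dotp_sub_right] at this; linarith
      have w2 : dotp u y ≤ dotp u x₀ := by
        have := weak x₀ hx₀ y hy; rw [dotp_sub_right] at this; linarith
      have hyS : y ∈ S := (Finset.mem_sdiff.1 hy).1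
      have hyA : y ∉ A := (Finset.mem_sdiff.1 hy).2
      constructor
      · by_contra hxx
        exact genpos_level S hgp u hu x x₀ y₀ (hAS hx) (hAS hx₀) hy₀S
          hxx (fun h => hy₀A (h ▸ hx)) hx₀y₀ (by linarith) (by linarith)
      · by_contra hyy
        exact genpos_level S hgp u hu y y₀ x₀ hyS hy₀S (hAS hx₀)
          hyy (fun h => hyA (h ▸ hx₀)) (Ne.symm hx₀y₀) (by linarith) (by linarith)
    refine tiebreak S A u hu x₀ y₀ htz hx₀y₀ ?_
    intro x hx y hy hne
    rcases lt_or_eq_of_le (weak x hx y hy) with h | h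
    · exact h
    · obtain ⟨rfl, rfl⟩ := huniq x hx y hy h.symm
      exact absurd rfl hne
  · push_neg at htie
    exact ⟨u, hu, fun x hx y hy => lt_of_le_of_ne (weak x hx y hy) (Ne.symm (htie x hx y hy))⟩

/-- the candidate unbounded region attached to an ordered pair of points -/
def Phi (S : Finset Plane) (pq : Plane × Plane) : Finset Plane :=
  insert pq.1 (S.filter fun s => dotp (Jr (pq.1 - pq.2)) pq.1 < dotp (Jr (pq.1 - pq.2)) s)

section PhiFacts
variable (S : Finset Plane) (p q : Plane)

lemma phi_subset (hp : p ∈ S) : Phi S (p, q) ⊆ S :=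
  Finset.insert_subset hp (Finset.filter_subset _ _)

lemma phi_mem_left : p ∈ Phi S (p, q) := Finset.mem_insert_self _ _

lemma level_eq : dotp (Jr (p - q)) q = dotp (Jr (p - q)) p := by
  have := dotp_Jr_self (p - q)
  rw [dotp_sub_right] at this
  linarith

lemma phi_not_mem_right (hpq : p ≠ q) : q ∉ Phi S (p, q) := by
  intro h
  rcases Finset.mem_insert.1 h with h | h
  · exact hpq h.symm
  · have := (Finset.mem_filter.1 h).2
    rw [level_eq] at this
    exact lt_irrefl _ this

variable {S p q}

lemma phi_weak (hpq : p ≠ q) :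
    ∀ x ∈ Phi S (p, q), ∀ y ∈ S \ Phi S (p, q),
      0 ≤ dotp (Jr (p - q)) (x - y) := by
  intro x hx y hy
  have hyA := (Finset.mem_sdiff.1 hy).2
  have hyle : dotp (Jr (p - q)) y ≤ dotp (Jr (p - q)) p := by
    by_contra hlt
    push_neg at hlt
    exact hyA (Finset.mem_insert.2 (Or.inr (Finset.mem_filter.2 ⟨(Finset.mem_sdiff.1 hy).1, hlt⟩)))
  rw [dotp_sub_right]
  rcases Finset.mem_insert.1 hx with rfl | hx
  · linarith
  · have := (Finset.mem_filter.1 hx).2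
    linarith

lemma phi_tie (hgp : GenPos S) (hp : p ∈ S) (hq : q ∈ S) (hpq : p ≠ q) :
    ∀ x ∈ Phi S (p, q), ∀ y ∈ S \ Phi S (p, q),
      dotp (Jr (p - q)) (x - y) = 0 → x = p ∧ y = q := by
  intro x hx y hy hz
  set w := Jr (p - q) with hw
  have hwne : w ≠ 0 := Jr_ne_zero _ (sub_ne_zero.2 hpq)
  have hyS := (Finset.mem_sdiff.1 hy).1
  have hyA := (Finset.mem_sdiff.1 hy).2
  have hxy : dotp w x = dotp w y := by rw [dotp_sub_right] at hz; linarith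
  have hyle : dotp w y ≤ dotp w p := by
    by_contra hlt
    push_neg at hlt
    exact hyA (Finset.mem_insert.2 (Or.inr (Finset.mem_filter.2 ⟨hyS, hlt⟩)))
  have hxp : x = p := by
    rcases Finset.mem_insert.1 hx with rfl | hxm
    · rfl
    · have := (Finset.mem_filter.1 hxm).2
      linarith
  refine ⟨hxp, ?_⟩
  by_contra hyq
  have hyp : y ≠ p := fun h => hyA (h ▸ phi_mem_left S p q)
  have lev1 : dotp w q = dotp w p := level_eq p q
  have lev2 : dotp w y = dotp w q := by rw [hxp] at hxy; linarith
  exact genpos_level S hgp w hwne y q p hyS hq hp hyq hyp (Ne.symm hpq) lev2 (by linarith)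

lemma phi_sep (hgp : GenPos S) (hp : p ∈ S) (hq : q ∈ S) (hpq : p ≠ q) :
    ∃ u : Plane, u ≠ 0 ∧ SepD S (Phi S (p, q)) u := by
  refine tiebreak S (Phi S (p, q)) (Jr (p - q)) (Jr_ne_zero _ (sub_ne_zero.2 hpq)) p q
    (dotp_Jr_self _) hpq ?_
  intro x hx y hy hne
  rcases lt_or_eq_of_le (phi_weak hpq x hx y hy) with h | h
  · exact h
  · obtain ⟨rfl, rfl⟩ := phi_tie hgp hp hq hpq x hx y hy h.symm
    exact absurd rfl hne

lemma phi_inj (hgp : GenPos S) {p' q' : Plane} (hp : p ∈ S) (hq : q ∈ S) (hpq : p ≠ q)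
    (hp' : p' ∈ S) (hq' : q' ∈ S) (hpq' : p' ≠ q')
    (h : Phi S (p, q) = Phi S (p', q')) : p = p' ∧ q = q' := by
  have hp'A : p' ∈ Phi S (p, q) := h ▸ phi_mem_left S p' q'
  have hq'A : q' ∈ S \ Phi S (p, q) :=
    Finset.mem_sdiff.2 ⟨hq', h ▸ phi_not_mem_right S p' q' hpq'⟩
  have hpA' : p ∈ Phi S (p', q') := h ▸ phi_mem_left S p q
  have hqA' : q ∈ S \ Phi S (p', q') :=
    Finset.mem_sdiff.2 ⟨hq, h ▸ phi_not_mem_right S p q hpq⟩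
  rcases lt_or_eq_of_le (phi_weak hpq p' hp'A q' hq'A) with h1 | h1
  · rcases lt_or_eq_of_le (phi_weak hpq' p hpA' q hqA') with h2 | h2
    · exfalso
      rw [dotp_Jr_antisymm] at h2
      linarith
    · obtain ⟨h3, h4⟩ := phi_tie hgp hp' hq' hpq' p hpA' q hqA' h2.symm
      exact ⟨h3, h4⟩
  · obtain ⟨h3, h4⟩ := phi_tie hgp hp hq hpq p' hp'A q' hq'A h1.symm
    exact ⟨h3.symm, h4.symm⟩

end PhiFacts

lemma phi_surj (S : Finset Plane) (hgp : GenPos S) (A : Finset Plane) (hAS : A ⊆ S)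
    (hA : A.Nonempty) (hSA : (S \ A).Nonempty) (u : Plane) (hu : u ≠ 0)
    (hsep : SepD S A u) : ∃ p ∈ A, ∃ q ∈ S \ A, Phi S (p, q) = A := by
  have hF : (A ×ˢ (S \ A)).Nonempty := hA.product hSA
  obtain ⟨z₀, hz₀F, hmin⟩ := Finset.exists_min_image (A ×ˢ (S \ A))
    (fun z => dotp (Jr u) (z.1 - z.2) / dotp u (z.1 - z.2)) hF
  obtain ⟨hx₀, hy₀⟩ := Finset.mem_product.1 hz₀F
  set x₀ := z₀.1 with hx₀def
  set y₀ := z₀.2 with hy₀def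
  have hy₀S := (Finset.mem_sdiff.1 hy₀).1
  have hy₀A := (Finset.mem_sdiff.1 hy₀).2
  have hx₀y₀ : x₀ ≠ y₀ := fun h => hy₀A (h ▸ hx₀)
  set w := Jr (x₀ - y₀) with hwdef
  have hwne : w ≠ 0 := Jr_ne_zero _ (sub_ne_zero.2 hx₀y₀)
  have huu : 0 < dotp u u := dotp_self_pos u hu
  have weak : ∀ x ∈ A, ∀ y ∈ S \ A, 0 ≤ dotp w (x - y) := by
    intro x hx y hy
    have ha : 0 < dotp u (x - y) := hsep x hx y hy
    have ha₀ : 0 < dotp u (x₀ - y₀) := hsep x₀ hx₀ y₀ hy₀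
    have hm := hmin (x, y) (Finset.mem_product.2 ⟨hx, hy⟩)
    simp only at hm
    rw [div_le_div_iff₀ ha₀ ha] at hm
    have hid := ratio_identity u (x₀ - y₀) (x - y)
    nlinarith
  have tie : ∀ x ∈ A, ∀ y ∈ S \ A, dotp w (x - y) = 0 → x = x₀ ∧ y = y₀ := by
    intro x hx y hy hz
    have hyS := (Finset.mem_sdiff.1 hy).1
    have hyA := (Finset.mem_sdiff.1 hy).2
    have e1 : dotp w x = dotp w y := by rw [dotp_sub_right] at hz; linarith
    have e0 : dotp w x₀ = dotp w y₀ := by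
      have := dotp_Jr_self (x₀ - y₀)
      rw [← hwdef, dotp_sub_right] at this
      linarith
    have w1 : dotp w y₀ ≤ dotp w x := by
      have := weak x hx y₀ hy₀; rw [dotp_sub_right] at this; linarith
    have w2 : dotp w y ≤ dotp w x₀ := by
      have := weak x₀ hx₀ y hy; rw [dotp_sub_right] at this; linarith
    constructor
    · by_contra hxx
      exact genpos_level S hgp w hwne x x₀ y₀ (hAS hx) (hAS hx₀) hy₀S
        hxx (fun h => hy₀A (h ▸ hx)) hx₀y₀ (by linarith) (by linarith)
    · by_contra hyy
      exact genpos_level S hgp w hwne y y₀ x₀ hyS hy₀S (hAS hx₀)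
        hyy (fun h => hyA (h ▸ hx₀)) (Ne.symm hx₀y₀) (by linarith) (by linarith)
  refine ⟨x₀, hx₀, y₀, hy₀, ?_⟩
  ext s
  simp only [Phi, Finset.mem_insert, Finset.mem_filter]
  constructor
  · rintro (rfl | ⟨hsS, hlt⟩)
    · exact hx₀
    · by_contra hsA
      have := weak x₀ hx₀ s (Finset.mem_sdiff.2 ⟨hsS, hsA⟩)
      rw [dotp_sub_right] at this
      rw [← hwdef] at hlt
      linarith
  · intro hsA
    by_cases hsx : s = x₀
    · exact Or.inl hsx
    · refine Or.inr ⟨hAS hsA, ?_⟩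
      have h1 : 0 ≤ dotp w (s - y₀) := weak s hsA y₀ hy₀
      have h2 : dotp w (s - y₀) ≠ 0 := fun h0 => hsx (tie s hsA y₀ hy₀ h0).1
      have e0 : dotp w x₀ = dotp w y₀ := by
        have := dotp_Jr_self (x₀ - y₀)
        rw [← hwdef, dotp_sub_right] at this
        linarith
      rw [dotp_sub_right] at h1 h2
      rw [← hwdef]
      rcases lt_or_eq_of_le h1 with h | h
      · linarith
      · exact absurd h.symm h2

end VorAux

/-- The total number of unbounded Voronoi regions over all orders `1`
through `n-1`: `∑_{k=1}^{n-1} f_k^∞ = n(n-1)`. -/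
theorem total_unbounded (S : Finset Plane) (n : ℕ) (hn : S.card = n)
    (hn3 : 3 ≤ n) (hgp : GenPos S) :
    ∑ k ∈ Finset.Icc 1 (n - 1), fInfVec S k = n * (n - 1) := by
  classical
  set G : Finset (Finset Plane) := S.powerset.filter
    (fun A => (1 ≤ A.card ∧ A.card ≤ n - 1) ∧
      ((VorRegion S A).Nonempty ∧ ¬ Bornology.IsBounded (VorRegion S A))) with hG
  have hfk : ∀ k, fInfVec S k = (S.powerset.filter fun A =>
      A.card = k ∧ ((VorRegion S A).Nonempty ∧ ¬ Bornology.IsBounded (VorRegion S A))).card := by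
    intro k
    unfold fInfVec
    rw [Finset.powersetCard_eq_filter, Finset.filter_filter]
  have hGfib : ∀ A ∈ G, A.card ∈ Finset.Icc 1 (n - 1) := by
    intro A hA
    rw [hG, Finset.mem_filter] at hA
    exact Finset.mem_Icc.2 ⟨hA.2.1.1, hA.2.1.2⟩
  have hsum : ∑ k ∈ Finset.Icc 1 (n - 1), fInfVec S k = G.card := by
    rw [Finset.card_eq_sum_card_fiberwise hGfib]
    refine Finset.sum_congr rfl fun k hk => ?_
    rw [hfk]
    congr 1
    ext A
    rw [Finset.mem_Icc] at hk
    simp only [hG, Finset.mem_filter, Finset.mem_powerset]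
    constructor
    · rintro ⟨hAS, hcard, hPA⟩
      exact ⟨⟨hAS, ⟨by omega, by omega⟩, hPA⟩, hcard⟩
    · rintro ⟨⟨hAS, _, hPA⟩, hcard⟩
      exact ⟨hAS, hcard, hPA⟩
  have hcard : S.offDiag.card = G.card := by
    apply Finset.card_bij (fun pq _ => VorAux.Phi S pq)
    · intro pq hpq
      rw [Finset.mem_offDiag] at hpq
      obtain ⟨hp, hq, hne⟩ := hpq
      obtain ⟨u, hu, hsep⟩ := VorAux.phi_sep (p := pq.1) (q := pq.2) hgp hp hq hne
      have hmem : pq.1 ∈ VorAux.Phi S (pq.1, pq.2) := VorAux.phi_mem_left S pq.1 pq.2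
      have hnmem : pq.2 ∉ VorAux.Phi S (pq.1, pq.2) := VorAux.phi_not_mem_right S pq.1 pq.2 hne
      have hsub : VorAux.Phi S (pq.1, pq.2) ⊆ S := VorAux.phi_subset S pq.1 pq.2 hp
      have hb := VorAux.unbounded_of_sep S (VorAux.Phi S (pq.1, pq.2)) ⟨pq.1, hmem⟩ u hu hsep
      have hcard1 : 1 ≤ (VorAux.Phi S (pq.1, pq.2)).card :=
        Finset.card_pos.2 ⟨pq.1, hmem⟩
      have hcard2 : (VorAux.Phi S (pq.1, pq.2)).card ≤ n - 1 := by
        have hsub2 : VorAux.Phi S (pq.1, pq.2) ⊆ S.erase pq.2 := by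
          intro x hx
          exact Finset.mem_erase.2 ⟨fun h => hnmem (h ▸ hx), hsub hx⟩
        calc (VorAux.Phi S (pq.1, pq.2)).card ≤ (S.erase pq.2).card :=
              Finset.card_le_card hsub2
          _ = n - 1 := by rw [Finset.card_erase_of_mem hq, hn]
      rw [hG, Finset.mem_filter, Finset.mem_powerset]
      exact ⟨hsub, ⟨hcard1, hcard2⟩, hb⟩
    · intro a ha b hb hab
      rw [Finset.mem_offDiag] at ha hb
      have := VorAux.phi_inj hgp ha.1 ha.2.1 ha.2.2 hb.1 hb.2.1 hb.2.2 hab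
      exact Prod.ext this.1 this.2
    · intro A hA
      rw [hG, Finset.mem_filter, Finset.mem_powerset] at hA
      obtain ⟨hAS, ⟨h1, h2⟩, hne, hnb⟩ := hA
      have hAne : A.Nonempty := Finset.card_pos.1 (by omega)
      have hSA : (S \ A).Nonempty := by
        rw [← Finset.card_pos, Finset.card_sdiff_of_subset hAS]
        omega
      obtain ⟨u, hu, hsep⟩ := VorAux.sep_of_unbounded S A hgp hAS hnb
      obtain ⟨p, hp, q, hq, hPhi⟩ := VorAux.phi_surj S hgp A hAS hAne hSA u hu hsep
      exact ⟨(p, q), Finset.mem_offDiag.2 ⟨hAS hp, (Finset.mem_sdiff.1 hq).1,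
        fun h => (Finset.mem_sdiff.1 hq).2 ((show p = q from h) ▸ hp)⟩, hPhi⟩
  rw [hsum, ← hcard, Finset.offDiag_card, hn]
  have hle : n ≤ n * n := Nat.le_mul_of_pos_left n (by omega)
  rw [Nat.sub_eq_iff_eq_add hle]
  cases n with
  | zero => simp
  | succ k => simp [Nat.succ_sub_one]; ring
end
end

section
/- Let S be a set of n ≥ 3 points in the Euclidean plane in general position. Then for every k with 1 ≤ k ≤ n−1, the number of unbounded regions of the k-th order Voronoi diagram equals the number of unbounded regions of the (n−k)-th order Voronoi diagram: f_k^∞ = f_{n−k}^∞. -/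
open scoped Classical RealInnerProductSpace

noncomputable section

lemma dist_le_dist_iff_inner' (p x y : Plane) :
    dist p x ≤ dist p y ↔ ‖x‖ ^ 2 - ‖y‖ ^ 2 ≤ 2 * ⟪p, x - y⟫ := by
  rw [← pow_le_pow_iff_left₀ dist_nonneg dist_nonneg (two_ne_zero), dist_eq_norm, dist_eq_norm,
    norm_sub_sq_real, norm_sub_sq_real, inner_sub_right]
  constructor <;> intro h <;> linarith

lemma collinear_of_inner_const (u : Plane) (hu : u ≠ 0) (s : Set Plane) (m : ℝ)
    (h : ∀ p ∈ s, ⟪u, p⟫ = m) : Collinear ℝ s := by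
  rw [collinear_iff_rank_le_one]
  have hle : vectorSpan ℝ s ≤ (ℝ ∙ u)ᗮ := by
    rw [vectorSpan_def, Submodule.span_le]
    rintro w ⟨a, ha, b, hb, rfl⟩
    rw [SetLike.mem_coe, Submodule.mem_orthogonal]
    rintro v hv
    rw [Submodule.mem_span_singleton] at hv
    obtain ⟨c, rfl⟩ := hv
    have h0 : ⟪u, a - b⟫ = 0 := by rw [inner_sub_right, h a ha, h b hb, sub_self]
    show ⟪c • u, a -ᵥ b⟫ = 0
    rw [vsub_eq_sub, real_inner_smul_left, h0, mul_zero]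
  have hfr : Module.finrank ℝ ((ℝ ∙ u)ᗮ) = 1 := by
    have h2 := Submodule.finrank_add_finrank_orthogonal (K := (ℝ ∙ u))
    rw [finrank_span_singleton hu] at h2
    have h3 : Module.finrank ℝ Plane = 2 := finrank_euclideanSpace_fin
    omega
  calc Module.rank ℝ (vectorSpan ℝ s) ≤ Module.rank ℝ ((ℝ ∙ u)ᗮ) := Submodule.rank_mono hle
    _ = 1 := by rw [← Module.finrank_eq_rank, hfr, Nat.cast_one]

lemma unbounded_to_dir (S A : Finset Plane) (hne : (VorRegion S A).Nonempty)
    (hub : ¬ Bornology.IsBounded (VorRegion S A)) :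
    ∃ u : Plane, u ≠ 0 ∧ ∀ x ∈ A, ∀ y ∈ S \ A, ⟪u, y⟫ ≤ ⟪u, x⟫ := by
  have hseq : ∀ n : ℕ, ∃ p, p ∈ VorRegion S A ∧ (n : ℝ) + 1 ≤ ‖p‖ := by
    intro n
    by_contra hc
    push_neg at hc
    exact hub (isBounded_iff_forall_norm_le.2 ⟨n + 1, fun p hp => (hc p hp).le⟩)
  choose p hp hnorm using hseq
  have hpos : ∀ n, (0:ℝ) < ‖p n‖ := fun n =>
    lt_of_lt_of_le (by positivity) (hnorm n)
  set v : ℕ → Plane := fun n => ‖p n‖⁻¹ • p n with hv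
  have hvmem : ∀ n, v n ∈ Metric.sphere (0 : Plane) 1 := by
    intro n
    simp [hv, norm_smul, abs_of_pos (inv_pos.2 (hpos n)),
      inv_mul_cancel₀ (hpos n).ne']
  obtain ⟨u, humem, φ, hφ, hconv⟩ :=
    (isCompact_sphere (0:Plane) 1).tendsto_subseq hvmem
  have hu : u ≠ 0 := by
    intro h
    rw [h] at humem
    simp at humem
  refine ⟨u, hu, ?_⟩
  intro x hx y hy
  have hptends : Filter.Tendsto (fun n => ‖p (φ n)‖) Filter.atTop Filter.atTop := by
    apply Filter.tendsto_atTop_mono (fun n => ?_) tendsto_natCast_atTop_atTop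
    calc (n : ℝ) ≤ φ n := by exact_mod_cast hφ.le_apply
      _ ≤ (φ n : ℝ) + 1 := by linarith
      _ ≤ ‖p (φ n)‖ := hnorm (φ n)
  have hf0 : Filter.Tendsto (fun n => ‖p (φ n)‖⁻¹ * ((‖x‖^2 - ‖y‖^2)/2))
      Filter.atTop (nhds 0) := by
    have := (tendsto_inv_atTop_zero.comp hptends).mul_const ((‖x‖^2 - ‖y‖^2)/2)
    simpa using this
  have hg : Filter.Tendsto (fun n => ⟪v (φ n), x - y⟫) Filter.atTop
      (nhds ⟪u, x - y⟫) := hconv.inner tendsto_const_nhds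
  have hle : ∀ n, ‖p (φ n)‖⁻¹ * ((‖x‖^2 - ‖y‖^2)/2) ≤ ⟪v (φ n), x - y⟫ := by
    intro n
    have h1 := (dist_le_dist_iff_inner' (p (φ n)) x y).1 (hp (φ n) x hx y hy)
    have h2 : ⟪v (φ n), x - y⟫ = ‖p (φ n)‖⁻¹ * ⟪p (φ n), x - y⟫ :=
      real_inner_smul_left _ _ _
    rw [h2]
    have h3 : (0:ℝ) ≤ ‖p (φ n)‖⁻¹ := inv_nonneg.2 (norm_nonneg _)
    have := mul_le_mul_of_nonneg_left (by linarith : (‖x‖^2 - ‖y‖^2)/2 ≤ ⟪p (φ n), x - y⟫) h3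
    linarith
  have h0le : (0:ℝ) ≤ ⟪u, x - y⟫ := le_of_tendsto_of_tendsto' hf0 hg hle
  rw [inner_sub_right] at h0le
  linarith

lemma dir_to_unbounded (S A : Finset Plane) (hA : A ⊆ S)
    (hgp : ∀ T ⊆ S, T.card = 3 → ¬ Collinear ℝ (T : Set Plane))
    (u : Plane) (hu : u ≠ 0)
    (h : ∀ x ∈ A, ∀ y ∈ S \ A, ⟪u, y⟫ ≤ ⟪u, x⟫) :
    (VorRegion S A).Nonempty ∧ ¬ Bornology.IsBounded (VorRegion S A) := by
  obtain ⟨p0, hp0⟩ : ∃ p0 : Plane, ∀ x ∈ A, ∀ y ∈ S \ A, ⟪u, x⟫ = ⟪u, y⟫ →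
      ‖x‖^2 - ‖y‖^2 ≤ 2 * ⟪p0, x - y⟫ := by
    by_cases hE : ∃ x ∈ A, ∃ y ∈ S \ A, ⟪u, x⟫ = ⟪u, y⟫
    · obtain ⟨x0, hx0, y0, hy0, he0⟩ := hE
      have hy0S := (Finset.mem_sdiff.1 hy0).1
      have hy0A := (Finset.mem_sdiff.1 hy0).2
      have hx0y0 : x0 ≠ y0 := fun hh => hy0A (hh ▸ hx0)
      have huniq : ∀ x ∈ A, ∀ y ∈ S \ A, ⟪u, x⟫ = ⟪u, y⟫ → x = x0 ∧ y = y0 := by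
        intro x hx y hy he
        have hyS := (Finset.mem_sdiff.1 hy).1
        have hyA := (Finset.mem_sdiff.1 hy).2
        have e1 : ⟪u, y0⟫ ≤ ⟪u, x⟫ := h x hx y0 hy0
        have e2 : ⟪u, y⟫ ≤ ⟪u, x0⟫ := h x0 hx0 y hy
        have ex : ⟪u, x⟫ = ⟪u, x0⟫ := by linarith
        have ey : ⟪u, y⟫ = ⟪u, x0⟫ := by linarith
        have ey0 : ⟪u, y0⟫ = ⟪u, x0⟫ := by linarith
        constructor
        · by_contra hne
          have hxy0 : x ≠ y0 := fun hh => hy0A (hh ▸ hx)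
          refine hgp {x, x0, y0} ?_ ?_ ?_
          · intro z hz
            simp only [Finset.mem_insert, Finset.mem_singleton] at hz
            rcases hz with rfl | rfl | rfl
            · exact hA hx
            · exact hA hx0
            · exact hy0S
          · rw [Finset.card_eq_three]
            exact ⟨x, x0, y0, hne, hxy0, hx0y0, rfl⟩
          · apply collinear_of_inner_const u hu _ ⟪u, x0⟫
            intro q hq
            simp only [Finset.coe_insert, Finset.coe_singleton, Set.mem_insert_iff,
              Set.mem_singleton_iff] at hq
            rcases hq with rfl | rfl | rfl
            · exact ex
            · rfl
            · exact ey0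
        · by_contra hne
          have hx0y : x0 ≠ y := fun hh => hyA (hh ▸ hx0)
          refine hgp {x0, y, y0} ?_ ?_ ?_
          · intro z hz
            simp only [Finset.mem_insert, Finset.mem_singleton] at hz
            rcases hz with rfl | rfl | rfl
            · exact hA hx0
            · exact hyS
            · exact hy0S
          · rw [Finset.card_eq_three]
            exact ⟨x0, y, y0, hx0y, hx0y0, hne, rfl⟩
          · apply collinear_of_inner_const u hu _ ⟪u, x0⟫
            intro q hq
            simp only [Finset.coe_insert, Finset.coe_singleton, Set.mem_insert_iff,
              Set.mem_singleton_iff] at hq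
            rcases hq with rfl | rfl | rfl
            · rfl
            · exact ey
            · exact ey0
      have hsub : x0 - y0 ≠ 0 := sub_ne_zero.2 hx0y0
      have hnpos : (0:ℝ) < ‖x0 - y0‖^2 := pow_pos (norm_pos_iff.2 hsub) 2
      refine ⟨((‖x0‖^2 - ‖y0‖^2)/(2*‖x0 - y0‖^2)) • (x0 - y0), ?_⟩
      intro x hx y hy he
      obtain ⟨rfl, rfl⟩ := huniq x hx y hy he
      rw [real_inner_smul_left, real_inner_self_eq_norm_sq]
      have key : 2 * (((‖x‖^2 - ‖y‖^2)/(2*‖x - y‖^2)) * ‖x - y‖^2) = ‖x‖^2 - ‖y‖^2 := by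
        field_simp
      rw [key]
    · refine ⟨0, ?_⟩
      intro x hx y hy he
      exact absurd ⟨x, hx, y, hy, he⟩ hE
  have hpair : ∀ x ∈ A, ∀ y ∈ S \ A, ∀ᶠ t : ℝ in Filter.atTop,
      dist (p0 + t • u) x ≤ dist (p0 + t • u) y := by
    intro x hx y hy
    rcases eq_or_lt_of_le (h x hx y hy) with heqc | hlt
    · filter_upwards with t
      rw [dist_le_dist_iff_inner', inner_add_left, real_inner_smul_left]
      have h0 : ⟪u, x - y⟫ = 0 := by rw [inner_sub_right]; linarith
      have h1 := hp0 x hx y hy heqc.symm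
      rw [h0]
      linarith
    · have h0 : (0:ℝ) < ⟪u, x - y⟫ := by rw [inner_sub_right]; linarith
      have htend : Filter.Tendsto (fun t : ℝ => ⟪p0, x - y⟫ + t * ⟪u, x - y⟫)
          Filter.atTop Filter.atTop :=
        Filter.tendsto_atTop_add_const_left _ _ (Filter.tendsto_id.atTop_mul_const h0)
      filter_upwards [htend.eventually_ge_atTop ((‖x‖^2 - ‖y‖^2)/2)] with t ht
      rw [dist_le_dist_iff_inner', inner_add_left, real_inner_smul_left]
      linarith
  have hev : ∀ᶠ t : ℝ in Filter.atTop, p0 + t • u ∈ VorRegion S A := by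
    have h1 : ∀ᶠ t : ℝ in Filter.atTop, ∀ x ∈ A, ∀ y ∈ S \ A,
        dist (p0 + t • u) x ≤ dist (p0 + t • u) y := by
      rw [Filter.eventually_all_finset]
      intro x hx
      rw [Filter.eventually_all_finset]
      intro y hy
      exact hpair x hx y hy
    exact h1
  constructor
  · obtain ⟨t, ht⟩ := hev.exists
    exact ⟨_, ht⟩
  · intro hb
    obtain ⟨C, hC⟩ := isBounded_iff_forall_norm_le.1 hb
    have htends : Filter.Tendsto (fun t : ℝ => ‖p0 + t • u‖) Filter.atTop Filter.atTop := by
      apply Filter.tendsto_atTop_mono (fun t => ?_)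
        (Filter.tendsto_atTop_add_const_right _ (-‖p0‖)
          (Filter.tendsto_id.atTop_mul_const (norm_pos_iff.2 hu)))
      have h1 : ‖t • u‖ ≤ ‖p0 + t • u‖ + ‖p0‖ := by
        calc ‖t • u‖ = ‖(p0 + t • u) - p0‖ := by rw [add_sub_cancel_left]
          _ ≤ ‖p0 + t • u‖ + ‖p0‖ := norm_sub_le _ _
      have h2 : t * ‖u‖ ≤ ‖t • u‖ := by
        rw [norm_smul, Real.norm_eq_abs]
        exact mul_le_mul_of_nonneg_right (le_abs_self t) (norm_nonneg u)
      simp only [id_eq]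
      linarith
    obtain ⟨t, ht1, ht2⟩ := (hev.and (htends.eventually_gt_atTop C)).exists
    exact absurd (hC _ ht1) (not_le.2 ht2)


lemma key_iff (S A : Finset Plane) (hA : A ⊆ S)
    (hgp : ∀ T ⊆ S, T.card = 3 → ¬ Collinear ℝ (T : Set Plane)) :
    ((VorRegion S A).Nonempty ∧ ¬ Bornology.IsBounded (VorRegion S A)) ↔
    ∃ u : Plane, u ≠ 0 ∧ ∀ x ∈ A, ∀ y ∈ S \ A, ⟪u, y⟫ ≤ ⟪u, x⟫ :=
  ⟨fun ⟨h1, h2⟩ => unbounded_to_dir S A h1 h2,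
   fun ⟨u, hu, h⟩ => dir_to_unbounded S A hA hgp u hu h⟩

lemma Q_compl (S A : Finset Plane) (hA : A ⊆ S)
    (hgp : ∀ T ⊆ S, T.card = 3 → ¬ Collinear ℝ (T : Set Plane)) :
    ((VorRegion S A).Nonempty ∧ ¬ Bornology.IsBounded (VorRegion S A)) ↔
    ((VorRegion S (S \ A)).Nonempty ∧ ¬ Bornology.IsBounded (VorRegion S (S \ A))) := by
  rw [key_iff S A hA hgp, key_iff S (S \ A) (Finset.sdiff_subset) hgp,
    Finset.sdiff_sdiff_eq_self hA]
  constructor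
  · rintro ⟨u, hu, h⟩
    refine ⟨-u, neg_ne_zero.2 hu, ?_⟩
    intro x hx y hy
    have := h y hy x hx
    rw [inner_neg_left, inner_neg_left]
    linarith
  · rintro ⟨u, hu, h⟩
    refine ⟨-u, neg_ne_zero.2 hu, ?_⟩
    intro x hx y hy
    have := h y hy x hx
    rw [inner_neg_left, inner_neg_left]
    linarith

/-- Symmetry in the number of unbounded regions: `f_k^∞ = f_{n-k}^∞`. -/
theorem unbounded_symmetry (S : Finset Plane) (n : ℕ) (hn : S.card = n)
    (hn3 : 3 ≤ n) (hgp : GenPos S) (k : ℕ) (hk1 : 1 ≤ k) (hkn : k + 1 ≤ n) :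
    fInfVec S k = fInfVec S (n - k) := by
  obtain ⟨hgp1, -⟩ := hgp
  unfold fInfVec
  refine Finset.card_nbij' (fun A => S \ A) (fun B => S \ B) ?_ ?_ ?_ ?_
  · intro A hAmem
    rw [Finset.mem_coe, Finset.mem_filter, Finset.mem_powersetCard] at hAmem ⊢
    obtain ⟨⟨hAS, hAc⟩, hQ⟩ := hAmem
    refine ⟨⟨Finset.sdiff_subset, by rw [Finset.card_sdiff_of_subset hAS, hn, hAc]⟩, ?_⟩
    exact (Q_compl S A hAS hgp1).1 hQ
  · intro B hBmem
    rw [Finset.mem_coe, Finset.mem_filter, Finset.mem_powersetCard] at hBmem ⊢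
    obtain ⟨⟨hBS, hBc⟩, hQ⟩ := hBmem
    have hcard : (S \ B).card = k := by
      rw [Finset.card_sdiff_of_subset hBS, hn, hBc]
      omega
    refine ⟨⟨Finset.sdiff_subset, hcard⟩, ?_⟩
    exact (Q_compl S B hBS hgp1).1 hQ
  · intro A hAmem
    rw [Finset.mem_coe, Finset.mem_filter, Finset.mem_powersetCard] at hAmem
    exact Finset.sdiff_sdiff_eq_self hAmem.1.1
  · intro B hBmem
    rw [Finset.mem_coe, Finset.mem_filter, Finset.mem_powersetCard] at hBmem
    exact Finset.sdiff_sdiff_eq_self hBmem.1.1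
end
end

section
/- Let S be a finite set of points in the Euclidean plane in general position. Then no Voronoi region of any order degenerates to a line segment or a single point: for every subset A ⊆ S, if the Voronoi region V(A) is nonempty then V(A) has nonempty topological interior. -/
open scoped Classical

noncomputable section

/-!
Take `p ∈ V(A)`. The constraints `dist z x ≤ dist z y` (`x ∈ A`, `y ∈ S \ A`) that are strict at
`p` stay strict near `p`. The tight ones involve only points of `S` on one circle about `p`; as
no four points of `S` are concyclic, the tight points of `A` or those of `S \ A` reduce to a
single point `c`. Moving `p` slightly towards `c` (if `c ∈ A`) or away from it (if `c ∉ A`) makes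
every tight constraint strict, since `2⟪a - p, b - a⟫ = -‖b - a‖²` for `a`, `b` on a circle
about `p`. The points where all constraints are strict form an open subset of `V(A)`.
-/

open Metric Topology
open scoped RealInnerProductSpace

lemma isOpen_setOf_forall_dist_lt {X : Type*} [PseudoMetricSpace X] (A B : Finset X) :
    IsOpen {z | ∀ x ∈ A, ∀ y ∈ B, dist z x < dist z y} := by
  simp only [Set.ofPred_forall]
  exact isOpen_biInter_finset fun x _ => isOpen_biInter_finset fun y _ =>
    isOpen_lt (by fun_prop) (by fun_prop)

section InnerProductSpace

variable {E : Type*} [NormedAddCommGroup E] [InnerProductSpace ℝ E]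

lemma two_mul_inner_sub_sub_of_dist_eq {a b p : E} (h : dist a p = dist b p) :
    2 * ⟪a - p, b - a⟫ = -‖b - a‖ ^ 2 := by
  have hsq : ‖(a - p) + (b - a)‖ ^ 2 = ‖a - p‖ ^ 2 := by
    rw [show (a - p) + (b - a) = b - p by abel, ← dist_eq_norm, ← dist_eq_norm, h]
  rw [norm_add_sq_real] at hsq
  linarith

lemma inner_sub_sub_neg_of_dist_eq {a b p : E} (h : dist a p = dist b p) (hab : a ≠ b) :
    ⟪a - p, b - a⟫ < 0 := by
  have hpos : 0 < ‖b - a‖ := norm_pos_iff.2 (sub_ne_zero.2 hab.symm)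
  nlinarith [two_mul_inner_sub_sub_of_dist_eq h]

lemma dist_add_smul_lt_of_dist_eq {p v x y : E} (htie : dist p x = dist p y)
    (hv : ⟪v, y - x⟫ < 0) {ε : ℝ} (hε : 0 < ε) :
    dist (p + ε • v) x < dist (p + ε • v) y := by
  have hx : p + ε • v - x = (p - x) + ε • v := by abel
  have hy : p + ε • v - y = (p - y) + ε • v := by abel
  have hdiff : ⟪p - x, v⟫ - ⟪p - y, v⟫ = ⟪v, y - x⟫ := by
    rw [← inner_sub_left, real_inner_comm, sub_sub_sub_cancel_left]
  have htie' : ‖p - x‖ = ‖p - y‖ := by rw [← dist_eq_norm, ← dist_eq_norm, htie]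
  refine lt_of_pow_lt_pow_left₀ 2 dist_nonneg ?_
  rw [dist_eq_norm, dist_eq_norm, hx, hy, norm_add_sq_real, norm_add_sq_real,
    real_inner_smul_right, real_inner_smul_right, htie']
  nlinarith

lemma exists_forall_dist_lt_of_inner_neg {A B : Finset E} {p v : E}
    (hp : ∀ x ∈ A, ∀ y ∈ B, dist p x ≤ dist p y)
    (hv : ∀ x ∈ A, ∀ y ∈ B, dist p x = dist p y → ⟪v, y - x⟫ < 0) :
    ∃ z, ∀ x ∈ A, ∀ y ∈ B, dist z x < dist z y := by
  have hev : ∀ᶠ ε in 𝓝[>] (0 : ℝ), ∀ x ∈ A, ∀ y ∈ B,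
      dist (p + ε • v) x < dist (p + ε • v) y := by
    simp only [Filter.eventually_all_finset]
    intro x hx y hy
    rcases (hp x hx y hy).eq_or_lt with htie | hlt
    · exact eventually_nhdsWithin_of_forall fun ε hε =>
        dist_add_smul_lt_of_dist_eq htie (hv x hx y hy htie) hε
    · refine nhdsWithin_le_nhds ((isOpen_lt ?_ ?_).mem_nhds (by simpa using hlt)) <;> fun_prop
  obtain ⟨ε, hε⟩ := hev.exists
  exact ⟨p + ε • v, hε⟩

lemma exists_inner_neg_of_sphere_subsingleton {A B : Finset E} {p : E}
    (hp : ∀ x ∈ A, ∀ y ∈ B, dist p x ≤ dist p y) (hAB : Disjoint A B)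
    (hsph : ∀ r,
      ((A : Set E) ∩ sphere p r).Subsingleton ∨ ((B : Set E) ∩ sphere p r).Subsingleton) :
    ∃ v : E, ∀ x ∈ A, ∀ y ∈ B, dist p x = dist p y → ⟪v, y - x⟫ < 0 := by
  by_cases htie : ∃ x₀ ∈ A, ∃ y₀ ∈ B, dist p x₀ = dist p y₀
  swap
  · exact ⟨0, fun x hx y hy hxy => (htie ⟨x, hx, y, hy, hxy⟩).elim⟩
  obtain ⟨x₀, hx₀, y₀, hy₀, h₀⟩ := htie
  have on_sphere : ∀ x ∈ A, ∀ y ∈ B, dist p x = dist p y →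
      x ∈ sphere p (dist p x₀) ∧ y ∈ sphere p (dist p x₀) := by
    intro x hx y hy hxy
    have h : dist p x = dist p x₀ :=
      le_antisymm (h₀ ▸ hp x hx y₀ hy₀) (hxy ▸ hp x₀ hx₀ y hy)
    simp only [mem_sphere, dist_comm _ p]
    exact ⟨h, hxy ▸ h⟩
  have hne : ∀ x ∈ A, ∀ y ∈ B, x ≠ y := fun x hx y hy hxy =>
    Finset.disjoint_left.1 hAB hx (hxy ▸ hy)
  rcases hsph (dist p x₀) with hA | hB
  · refine ⟨x₀ - p, fun x hx y hy hxy => ?_⟩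
    obtain ⟨hxs, hys⟩ := on_sphere x hx y hy hxy
    obtain rfl : x = x₀ := hA ⟨hx, hxs⟩ ⟨hx₀, mem_sphere.2 (dist_comm x₀ p)⟩
    exact inner_sub_sub_neg_of_dist_eq (mem_sphere.1 hxs ▸ (mem_sphere.1 hys).symm)
      (hne x hx y hy)
  · refine ⟨p - y₀, fun x hx y hy hxy => ?_⟩
    obtain ⟨hxs, hys⟩ := on_sphere x hx y hy hxy
    obtain rfl : y = y₀ := hB ⟨hy, hys⟩ ⟨hy₀, mem_sphere.2 (dist_comm y₀ p ▸ h₀.symm)⟩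
    rw [← inner_neg_neg, neg_sub, neg_sub]
    exact inner_sub_sub_neg_of_dist_eq (mem_sphere.1 hys ▸ (mem_sphere.1 hxs).symm)
      (hne x hx y hy).symm

end InnerProductSpace

lemma GenPos.sphere_subsingleton_or {S A : Finset Plane} (hgp : GenPos S) (hA : A ⊆ S)
    (p : Plane) (r : ℝ) :
    ((A : Set Plane) ∩ sphere p r).Subsingleton ∨
      (((S \ A : Finset Plane) : Set Plane) ∩ sphere p r).Subsingleton := by
  by_contra! h
  obtain ⟨⟨x₁, ⟨hx₁, hx₁r⟩, x₂, ⟨hx₂, hx₂r⟩, hx⟩, ⟨y₁, ⟨hy₁, hy₁r⟩, y₂, ⟨hy₂, hy₂r⟩, hy⟩⟩ := h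
  rw [Finset.mem_coe] at hx₁ hx₂ hy₁ hy₂
  have hxA : {x₁, x₂} ⊆ A := Finset.insert_subset hx₁ (Finset.singleton_subset_iff.2 hx₂)
  have hyB : {y₁, y₂} ⊆ S \ A := Finset.insert_subset hy₁ (Finset.singleton_subset_iff.2 hy₂)
  refine hgp.2 ({x₁, x₂} ∪ {y₁, y₂}) ?_ ?_ ⟨p, r, ?_⟩
  · exact Finset.union_subset (hxA.trans hA) (hyB.trans Finset.sdiff_subset)
  · rw [Finset.card_union_of_disjoint (Finset.disjoint_sdiff.mono hxA hyB),
      Finset.card_pair hx, Finset.card_pair hy]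
  · simp only [Finset.mem_union, Finset.mem_insert, Finset.mem_singleton]
    rintro q ((rfl | rfl) | (rfl | rfl)) <;> assumption

/-- Nonempty Voronoi regions do not degenerate: for `S` in general
position, every nonempty Voronoi region has nonempty interior. -/
theorem vorRegion_nondegenerate (S : Finset Plane) (hgp : GenPos S)
    (A : Finset Plane) (hA : A ⊆ S) (hne : (VorRegion S A).Nonempty) :
    (interior (VorRegion S A)).Nonempty := by
  obtain ⟨p, hp⟩ := hne
  obtain ⟨v, hv⟩ := exists_inner_neg_of_sphere_subsingleton hp Finset.disjoint_sdiff
    (hgp.sphere_subsingleton_or hA p)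
  obtain ⟨z, hz⟩ := exists_forall_dist_lt_of_inner_neg hp hv
  exact ⟨z, interior_maximal (fun w hw x hx y hy => (hw x hx y hy).le)
    (isOpen_setOf_forall_dist_lt A (S \ A)) hz⟩
end
end

section
/- Let S be a finite set of points in the Euclidean plane in general position. Then the Voronoi poset of S is graded by cardinality: for every nonempty subset A ⊆ S with V(A) ≠ ∅, there exists a point a ∈ A such that V(A ∖ {a}) ≠ ∅. (Consequently every element of the Voronoi poset lies on a maximal chain descending to the empty set, with rank function the cardinality.) -/
open scoped Classical

noncomputable section

theorem mem_vorRegion_erase_of_farthest {S A : Finset Plane} {p a : Plane}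
    (hp : p ∈ VorRegion S A) (hfar : ∀ x ∈ A, dist p x ≤ dist p a) :
    p ∈ VorRegion S (A.erase a) := by
  intro x hx y hy
  have hxA : x ∈ A := Finset.mem_of_mem_erase hx
  obtain ⟨hyS, hyA⟩ := Finset.mem_sdiff.mp hy
  by_cases hya : y = a
  · exact hya ▸ hfar x hxA
  · have hyA' : y ∉ A := fun h => hyA (Finset.mem_erase.mpr ⟨hya, h⟩)
    exact hp x hxA y (Finset.mem_sdiff.mpr ⟨hyS, hyA'⟩)

theorem voronoi_poset_graded_general (S : Finset Plane)
    (A : Finset Plane) (hAne : A.Nonempty)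
    (hne : (VorRegion S A).Nonempty) :
    ∃ a ∈ A, (VorRegion S (A.erase a)).Nonempty := by
  obtain ⟨p, hp⟩ := hne
  obtain ⟨a, haA, hfar⟩ := A.exists_max_image (dist p) hAne
  exact ⟨a, haA, p, mem_vorRegion_erase_of_farthest hp hfar⟩

/-- The Voronoi poset is graded: every nonempty element of the poset
covers an element one rank lower obtained by removing a suitable site. -/
theorem voronoi_poset_graded (S : Finset Plane) (hgp : GenPos S)
    (A : Finset Plane) (hA : A ⊆ S) (hAne : A.Nonempty)
    (hne : (VorRegion S A).Nonempty) :
    ∃ a ∈ A, (VorRegion S (A.erase a)).Nonempty :=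
  voronoi_poset_graded_general S A hAne hne
end
end

section
/- Let S be a set of n ≥ 4 points in the Euclidean plane in general position, with n ≡ 0 (mod 4). Then the reduced Euler characteristic of the Voronoi poset of S is odd: with the convention f_0 = 1, the alternating sum ∑_{k=0}^{n} (−1)^k f_k is an odd integer. -/
open scoped Classical

noncomputable section

open Module


section Part2

variable {V : Type*} [AddCommGroup V] [Module ℝ V]

def aval (L : (V →ₗ[ℝ] ℝ) × ℝ) (w : V) : ℝ := L.1 w + L.2

theorem aval_add_smul (L : (V →ₗ[ℝ] ℝ) × ℝ) (w v : V) (δ : ℝ) :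
    aval L (w + δ • v) = aval L w + δ * L.1 v := by
  simp only [aval, map_add, map_smul, smul_eq_mul]; ring

theorem sign_helper {b x : ℝ} (h : |x| < |b|) : (b < 0 → b + x < 0) ∧ (0 < b → 0 < b + x) := by
  rcases le_or_gt b 0 with hb | hb
  · rw [abs_lt] at h
    rcases lt_or_ge b 0 with hb' | hb'
    · rw [abs_of_neg hb'] at h; constructor <;> intro <;> linarith [h.1, h.2]
    · constructor <;> intro <;> linarith
  · rw [abs_lt, abs_of_pos hb] at h; constructor <;> intro <;> linarith [h.1, h.2]

theorem small_eps {ι : Type*} (J : Finset ι) (b g : ι → ℝ) (hb : ∀ i ∈ J, b i ≠ 0) :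
    ∃ ε : ℝ, 0 < ε ∧ ∀ δ : ℝ, |δ| ≤ ε → ∀ i ∈ J, |δ * g i| < |b i| := by
  rcases J.eq_empty_or_nonempty with rfl | hJ
  · exact ⟨1, one_pos, by simp⟩
  refine ⟨J.inf' hJ (fun i => |b i| / (|g i| + 1)), ?_, ?_⟩
  · rw [Finset.lt_inf'_iff]
    intro i hi
    have h1 : 0 < |b i| := abs_pos.2 (hb i hi)
    have h2 : 0 < |g i| + 1 := by positivity
    positivity
  · intro δ hδ i hi
    have h1 : |δ| ≤ |b i| / (|g i| + 1) := le_trans hδ (Finset.inf'_le _ hi)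
    have h2 : 0 < |g i| + 1 := by positivity
    have h3 : 0 < |b i| := abs_pos.2 (hb i hi)
    calc |δ * g i| = |δ| * |g i| := abs_mul _ _
      _ ≤ (|b i| / (|g i| + 1)) * |g i| := mul_le_mul_of_nonneg_right h1 (abs_nonneg _)
      _ < |b i| := by
          rw [div_mul_eq_mul_div, div_lt_iff₀ h2]
          nlinarith [abs_nonneg (g i)]

end Part2

/-- independence of a finite family of linear functionals, elementary form. -/
def Indep {ι V : Type*} [AddCommGroup V] [Module ℝ V] (I : Finset ι)
    (f : ι → V →ₗ[ℝ] ℝ) : Prop :=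
  ∀ a : ι → ℝ, (∑ i ∈ I, a i • f i) = 0 → ∀ i ∈ I, a i = 0

theorem indep_insert_elim {ι V : Type*} [AddCommGroup V] [Module ℝ V] {I : Finset ι}
    {a : ι} {f : ι → V →ₗ[ℝ] ℝ} (ha : a ∉ I) (h : Indep (insert a I) f) : Indep I f := by
  intro c hc i hi
  have hia : i ≠ a := fun h' => ha (h' ▸ hi)
  have := h (Function.update c a 0) ?_ i (Finset.mem_insert_of_mem hi)
  · rwa [Function.update_of_ne hia] at this
  · rw [Finset.sum_insert ha, Function.update_self, zero_smul, zero_add, ← hc]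
    refine Finset.sum_congr rfl fun j hj => ?_
    rw [Function.update_of_ne (by rintro rfl; exact ha hj)]

/-- existence of a dual family for an independent finite family of functionals -/
theorem dual_family {ι V : Type*} [AddCommGroup V] [Module ℝ V] (f : ι → V →ₗ[ℝ] ℝ) :
    ∀ I : Finset ι, Indep I f →
      ∃ u : ι → V, ∀ i ∈ I, ∀ j ∈ I, f j (u i) = if i = j then 1 else 0 := by
  intro I
  induction I using Finset.induction_on with
  | empty => exact fun _ => ⟨fun _ => 0, by simp⟩
  | @insert a I ha ih =>
    intro hind
    obtain ⟨u, hu⟩ := ih (indep_insert_elim ha hind)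
    have hg : ∃ v, f a v - ∑ i ∈ I, f i v * f a (u i) ≠ 0 := by
      by_contra hcon
      push_neg at hcon
      have heq : (f a - ∑ i ∈ I, f a (u i) • f i) = 0 := by
        ext v
        have h1 := hcon v
        simp only [LinearMap.sub_apply, LinearMap.coe_sum, Finset.sum_apply,
          LinearMap.smul_apply, smul_eq_mul, LinearMap.zero_apply]
        rw [sub_eq_zero] at h1 ⊢
        rw [h1]
        exact Finset.sum_congr rfl fun i _ => mul_comm _ _
      have h0 := hind (Function.update (fun j => f a (u j)) a (-1)) ?_ a
        (Finset.mem_insert_self a I)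
      · rw [Function.update_self] at h0; norm_num at h0
      · rw [Finset.sum_insert ha, Function.update_self]
        have hsum : ∑ j ∈ I, Function.update (fun j => f a (u j)) a (-1) j • f j
            = ∑ j ∈ I, f a (u j) • f j := by
          refine Finset.sum_congr rfl fun j hj => ?_
          rw [Function.update_of_ne (by rintro rfl; exact ha hj)]
        rw [hsum, neg_smul (M := V →ₗ[ℝ] ℝ), one_smul, neg_add_eq_zero]
        exact sub_eq_zero.mp heq
    obtain ⟨v, hv⟩ := hg
    set c : ℝ := f a v - ∑ i ∈ I, f i v * f a (u i) with hc
    set v₀ : V := c⁻¹ • (v - ∑ i ∈ I, f i v • u i) with hv₀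
    have hfav₀ : f a v₀ = 1 := by
      rw [hv₀, map_smul, map_sub, map_sum, smul_eq_mul]
      have : ∑ i ∈ I, f a (f i v • u i) = ∑ i ∈ I, f i v * f a (u i) := by
        refine Finset.sum_congr rfl fun i _ => by rw [map_smul, smul_eq_mul]
      rw [this, ← hc, inv_mul_cancel₀ hv]
    have hfjv₀ : ∀ j ∈ I, f j v₀ = 0 := by
      intro j hj
      rw [hv₀, map_smul, map_sub, map_sum, smul_eq_mul]
      have : ∑ i ∈ I, f j (f i v • u i) = f j v := by
        rw [Finset.sum_eq_single j (fun i hi hij => by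
          rw [map_smul, hu i hi j hj, if_neg hij, smul_eq_mul, mul_zero])
          (fun h => (h hj).elim), map_smul, hu j hj j hj, if_pos rfl, smul_eq_mul, mul_one]
      rw [this, sub_self, mul_zero]
    refine ⟨Function.update (fun i => u i - f a (u i) • v₀) a v₀, ?_⟩
    intro i hi j hj
    rcases Finset.mem_insert.1 hi with rfl | hi'
    · rw [Function.update_self]
      rcases Finset.mem_insert.1 hj with rfl | hj'
      · rw [if_pos rfl, hfav₀]
      · rw [if_neg (fun h : i = j => ha (h ▸ hj')), hfjv₀ j hj']
    · rw [Function.update_of_ne (by rintro rfl; exact ha hi')]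
      rcases Finset.mem_insert.1 hj with rfl | hj'
      · rw [if_neg (fun h : i = j => ha (h.symm ▸ hi'))]
        rw [map_sub, map_smul, hfav₀, smul_eq_mul, mul_one, sub_self]
      · rw [map_sub, map_smul, hfjv₀ j hj', smul_eq_mul, mul_zero, sub_zero, hu i hi' j hj']

/-- independent functionals are jointly surjective -/
theorem surj_of_indep {ι V : Type*} [AddCommGroup V] [Module ℝ V] {f : ι → V →ₗ[ℝ] ℝ}
    {I : Finset ι} (h : Indep I f) (t : ι → ℝ) : ∃ v, ∀ i ∈ I, f i v = t i := by
  obtain ⟨u, hu⟩ := dual_family f I h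
  refine ⟨∑ j ∈ I, t j • u j, ?_⟩
  intro i hi
  rw [map_sum, Finset.sum_eq_single i (fun j hj hji => by
    rw [map_smul, hu j hj i hi, if_neg hji, smul_eq_mul, mul_zero]) (fun h => (h hi).elim),
    map_smul, hu i hi i hi, if_pos rfl, smul_eq_mul, mul_one]

section Part3

variable {V : Type*} [AddCommGroup V] [Module ℝ V]

/-- transfer of Indep along an injective reindexing -/
theorem indep_comp {ι ι' : Type*} [DecidableEq ι] {g : ι' → ι} (hg : Function.Injective g)
    {I : Finset ι'} {f : ι → V →ₗ[ℝ] ℝ} (h : Indep (I.image g) f) :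
    Indep I (fun i => f (g i)) := by
  intro a ha i hi
  have hsum : ∑ j ∈ I.image g, (∑ i ∈ I.filter (fun i => g i = j), a i) • f j
      = ∑ i ∈ I, a i • f (g i) := by
    refine Finset.sum_image' (fun i => a i • f (g i)) (fun i hi => ?_)
    have he : ∑ j ∈ I.filter (fun j => g j = g i), a j • f (g j)
        = ∑ j ∈ I.filter (fun j => g j = g i), a j • f (g i) :=
      Finset.sum_congr rfl fun j hj => by rw [(Finset.mem_filter.1 hj).2]
    rw [he, ← Finset.sum_smul]
  have hbz : ∑ j ∈ I.filter (fun j => g j = g i), a j = 0 :=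
    h _ (by rw [hsum]; exact ha) (g i) (Finset.mem_image_of_mem g hi)
  have hfil : I.filter (fun j => g j = g i) = {i} := by
    ext j
    simp only [Finset.mem_filter, Finset.mem_singleton]
    exact ⟨fun hj => hg hj.2, fun h' => ⟨h' ▸ hi, h' ▸ rfl⟩⟩
  rw [hfil, Finset.sum_singleton] at hbz
  exact hbz

def patSet {n : ℕ} (L : Fin n → (V →ₗ[ℝ] ℝ) × ℝ) : Finset (Fin n → Bool) :=
  Finset.univ.filter
    (fun σ => ∃ w : V, ∀ i, if σ i then aval (L i) w < 0 else 0 < aval (L i) w)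

theorem mem_patSet {n : ℕ} {L : Fin n → (V →ₗ[ℝ] ℝ) × ℝ} {σ : Fin n → Bool} :
    σ ∈ patSet L ↔ ∃ w : V, ∀ i, if σ i then aval (L i) w < 0 else 0 < aval (L i) w := by
  simp [patSet]

end Part3

section Part4

set_option maxHeartbeats 2000000 in
theorem count_pats (n : ℕ) : ∀ (d : ℕ) (V : Type) [AddCommGroup V] [Module ℝ V]
    [FiniteDimensional ℝ V], finrank ℝ V = d → ∀ (L : Fin n → (V →ₗ[ℝ] ℝ) × ℝ),
    (∀ I : Finset (Fin n), I.card ≤ d → Indep I (fun i => (L i).1)) →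
    (∀ I : Finset (Fin n), I.card = d + 1 → ¬∃ w : V, ∀ i ∈ I, aval (L i) w = 0) →
    (patSet L).card = ∑ i ∈ Finset.range (d + 1), n.choose i := by
  induction n with
  | zero =>
    intro d V _ _ _ hd L h1 h2
    have hall : patSet L = Finset.univ :=
      Finset.eq_univ_iff_forall.2 fun σ => mem_patSet.2 ⟨0, fun i => i.elim0⟩
    rw [hall]
    have hcard : (Finset.univ : Finset (Fin 0 → Bool)).card = 1 := by simp
    rw [hcard, Finset.sum_eq_single 0
      (fun i _ hi => Nat.choose_eq_zero_of_lt (Nat.pos_of_ne_zero hi)) (by simp)]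
    rfl
  | succ n ih =>
    intro d V _ _ _ hd L hGP1 hGP2
    rcases Nat.eq_zero_or_pos d with rfl | hdpos
    · -- dimension 0 : a single pattern
      have hsub : Subsingleton V := finrank_zero_iff.mp hd
      have hnz : ∀ i (w : V), aval (L i) w ≠ 0 := by
        intro i w h
        exact hGP2 {i} (by simp) ⟨w, by simpa using h⟩
      have hps : patSet L = {fun i => decide (aval (L i) 0 < 0)} := by
        ext σ
        rw [mem_patSet, Finset.mem_singleton]
        constructor
        · rintro ⟨w, hw⟩
          have hw0 : w = (0 : V) := Subsingleton.elim _ _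
          funext i
          have hi := hw i
          rw [hw0] at hi
          cases hσ : σ i
          · rw [hσ] at hi; simp only [Bool.false_eq_true, if_false] at hi
            exact (decide_eq_false (not_lt.2 hi.le)).symm
          · rw [hσ] at hi; simp only [if_true] at hi
            exact (decide_eq_true hi).symm
        · rintro rfl
          refine ⟨0, fun i => ?_⟩
          rcases lt_trichotomy (aval (L i) 0) 0 with h | h | h
          · simp [h]
          · exact absurd h (hnz i 0)
          · simp [not_lt.2 h.le, h]
      rw [hps, Finset.card_singleton]
      simp
    · obtain ⟨e, rfl⟩ : ∃ e, d = e + 1 := ⟨d - 1, (Nat.succ_pred_eq_of_pos hdpos).symm⟩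
      -- the linear part of L 0 is nonzero
      have hf₀ : (L 0).1 ≠ 0 := by
        intro h0
        have := hGP1 {0} (by simp) (fun _ => 1)
          (by rw [Finset.sum_singleton]; simp [h0]) 0 (Finset.mem_singleton_self 0)
        norm_num at this
      obtain ⟨v, hv⟩ : ∃ v, (L 0).1 v ≠ 0 := by
        by_contra hcon; push_neg at hcon
        exact hf₀ (LinearMap.ext fun w => by rw [hcon w, LinearMap.zero_apply])
      obtain ⟨v₁, hv₁⟩ : ∃ v₁, (L 0).1 v₁ = 1 :=
        ⟨((L 0).1 v)⁻¹ • v, by rw [map_smul, smul_eq_mul, inv_mul_cancel₀ hv]⟩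
      obtain ⟨w₀, hw₀⟩ : ∃ w₀, aval (L 0) w₀ = 0 :=
        ⟨(-(L 0).2) • v₁, by simp [aval, map_smul, hv₁]⟩
      have hK : finrank ℝ (LinearMap.ker (L 0).1) = e := by
        have h1 := LinearMap.finrank_range_add_finrank_ker (L 0).1
        have h2 : LinearMap.range (L 0).1 = ⊤ := LinearMap.range_eq_top.2
          (fun r => ⟨r • v₁, by rw [map_smul, hv₁, smul_eq_mul, mul_one]⟩)
        rw [h2, finrank_top, hd] at h1
        simp only [finrank_self] at h1
        omega
      set M : Fin n → (↥(LinearMap.ker (L 0).1) →ₗ[ℝ] ℝ) × ℝ :=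
        fun i => ((L i.succ).1.comp (LinearMap.ker (L 0).1).subtype, aval (L i.succ) w₀)
        with hMdef
      have havalM : ∀ (i : Fin n) (k : ↥(LinearMap.ker (L 0).1)),
          aval (M i) k = aval (L i.succ) (w₀ + (k : V)) := by
        intro i k
        simp only [hMdef, aval, LinearMap.comp_apply, Submodule.coe_subtype, map_add]
        ring
      have hGP1' : ∀ I : Finset (Fin n), I.card ≤ e + 1 →
          Indep I (fun i => (L i.succ).1) := by
        intro I hI
        have h := hGP1 (I.image Fin.succ)
          (by rwa [Finset.card_image_of_injective _ (Fin.succ_injective n)])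
        exact indep_comp (Fin.succ_injective n) h
      have hGP2' : ∀ I : Finset (Fin n), I.card = e + 1 + 1 →
          ¬∃ w : V, ∀ i ∈ I, aval (L i.succ) w = 0 := by
        rintro I hI ⟨w, hw⟩
        refine hGP2 (I.image Fin.succ)
          (by rwa [Finset.card_image_of_injective _ (Fin.succ_injective n)]) ⟨w, ?_⟩
        intro j hj
        obtain ⟨i, hi, rfl⟩ := Finset.mem_image.1 hj
        exact hw i hi
      have hmult : ∀ gl : V →ₗ[ℝ] ℝ, (∀ k : ↥(LinearMap.ker (L 0).1), gl k = 0) →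
          gl = gl v₁ • (L 0).1 := by
        intro gl hgl
        ext w
        have hk : w - (L 0).1 w • v₁ ∈ LinearMap.ker (L 0).1 := by
          simp [LinearMap.mem_ker, map_sub, map_smul, hv₁]
        have h := hgl ⟨_, hk⟩
        simp only [map_sub, map_smul, smul_eq_mul] at h
        simp only [LinearMap.smul_apply, smul_eq_mul]
        linarith [h]
      have h0notin : ∀ I : Finset (Fin n), (0 : Fin (n+1)) ∉ I.image Fin.succ := by
        intro I h
        obtain ⟨i, _, hi⟩ := Finset.mem_image.1 h
        exact Fin.succ_ne_zero i hi
      have hGP1M : ∀ I : Finset (Fin n), I.card ≤ e → Indep I (fun i => (M i).1) := by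
        intro I hI a ha i hi
        have hglK : ∀ k : ↥(LinearMap.ker (L 0).1),
            (∑ j ∈ I, a j • (L j.succ).1) k = 0 := by
          intro k
          have h := congrArg (fun m : ↥(LinearMap.ker (L 0).1) →ₗ[ℝ] ℝ => m k) ha
          simp only [LinearMap.coe_sum, Finset.sum_apply, LinearMap.smul_apply,
            smul_eq_mul, LinearMap.zero_apply] at h ⊢
          rw [← h]
          refine Finset.sum_congr rfl fun j hj => ?_
          simp [hMdef]
        have hgl := hmult _ hglK
        have hcard : (insert 0 (I.image Fin.succ)).card ≤ e + 1 := by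
          rw [Finset.card_insert_of_notMem (h0notin I),
            Finset.card_image_of_injective _ (Fin.succ_injective n)]
          omega
        have hdep := hGP1 _ hcard
          (Fin.cons (-((∑ j ∈ I, a j • (L j.succ).1 : V →ₗ[ℝ] ℝ) v₁)) a) ?_
        · have h := hdep i.succ (Finset.mem_insert_of_mem (Finset.mem_image_of_mem _ hi))
          rwa [Fin.cons_succ] at h
        · rw [Finset.sum_insert (h0notin I), Fin.cons_zero]
          have himgsum := Finset.sum_image
            (g := Fin.succ) (s := I)
            (f := fun jj => (Fin.cons (-((∑ j ∈ I, a j • (L j.succ).1 : V →ₗ[ℝ] ℝ) v₁)) a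
              : Fin (n+1) → ℝ) jj • (L jj).1)
            (fun x _ y _ h => Fin.succ_injective n h)
          rw [himgsum]
          have hss : (∑ i ∈ I, (Fin.cons
              (-((∑ j ∈ I, a j • (L j.succ).1 : V →ₗ[ℝ] ℝ) v₁)) a : Fin (n+1) → ℝ) i.succ
                • (L i.succ).1)
              = ∑ j ∈ I, a j • (L j.succ).1 :=
            Finset.sum_congr rfl fun j hj => by rw [Fin.cons_succ]
          rw [hss, neg_smul (M := V →ₗ[ℝ] ℝ), neg_add_eq_zero]
          exact hgl.symm
      have hGP2M : ∀ I : Finset (Fin n), I.card = e + 1 →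
          ¬∃ k : ↥(LinearMap.ker (L 0).1), ∀ i ∈ I, aval (M i) k = 0 := by
        rintro I hI ⟨k, hk⟩
        refine hGP2 (insert 0 (I.image Fin.succ)) ?_ ⟨w₀ + (k : V), ?_⟩
        · rw [Finset.card_insert_of_notMem (h0notin I),
            Finset.card_image_of_injective _ (Fin.succ_injective n)]
          omega
        · intro j hj
          rcases Finset.mem_insert.1 hj with rfl | hj'
          · have h : aval (L 0) (w₀ + (k : V)) = aval (L 0) w₀ + (L 0).1 (k : V) := by
              simp only [aval, map_add]
              ring
            rw [h, hw₀, LinearMap.mem_ker.1 k.2, add_zero]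
          · obtain ⟨i, hi, rfl⟩ := Finset.mem_image.1 hj'
            rw [← havalM i k]
            exact hk i hi
      -- realizing both extensions from a point on the hyperplane
      have hrealize : ∀ (σ' : Fin n → Bool) (w : V),
          (∀ i, if σ' i then aval (L i.succ) w < 0 else 0 < aval (L i.succ) w) →
          aval (L 0) w = 0 →
          ∀ s : Bool, (Fin.cons s σ' : Fin (n+1) → Bool) ∈ patSet L := by
        intro σ' w hw h0 s
        have hbnz : ∀ i ∈ (Finset.univ : Finset (Fin n)), aval (L i.succ) w ≠ 0 := by
          intro i _
          have h := hw i
          cases hσ : σ' i <;> rw [hσ] at h <;> simp only [Bool.false_eq_true, if_false,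
            if_true] at h
          exacts [ne_of_gt h, ne_of_lt h]
        obtain ⟨ε, hε, hεp⟩ := small_eps Finset.univ (fun i : Fin n => aval (L i.succ) w)
          (fun i : Fin n => (L i.succ).1 v₁) hbnz
        have habs : |(if s then -ε else ε : ℝ)| ≤ ε := by
          cases s <;> simp [abs_of_pos hε, abs_of_neg (neg_neg_of_pos hε), le_refl]
        refine mem_patSet.2 ⟨w + (if s then -ε else ε : ℝ) • v₁, fun j => ?_⟩
        refine Fin.cases ?_ (fun i => ?_) j
        · rw [Fin.cons_zero, aval_add_smul, h0, zero_add, hv₁, mul_one]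
          cases s <;> simp [hε, neg_neg_of_pos hε]
        · rw [Fin.cons_succ, aval_add_smul]
          have hsp := sign_helper (hεp _ habs i (Finset.mem_univ i))
          have h := hw i
          cases hσ : σ' i <;>
            simp only [hσ, Bool.false_eq_true, if_false, if_true, eq_self_iff_true] at h ⊢
          · exact hsp.2 h
          · exact hsp.1 h
      -- the image of the patterns under dropping index 0
      have himg : (patSet L).image Fin.tail = patSet (fun i => L i.succ) := by
        ext σ'
        constructor
        · intro h
          obtain ⟨σ, hσ, rfl⟩ := Finset.mem_image.1 h
          obtain ⟨w, hw⟩ := mem_patSet.1 hσ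
          exact mem_patSet.2 ⟨w, fun i => hw i.succ⟩
        · intro hσ'
          obtain ⟨w, hw⟩ := mem_patSet.1 hσ'
          by_cases h0 : aval (L 0) w = 0
          · exact Finset.mem_image.2 ⟨Fin.cons true σ', hrealize σ' w hw h0 true,
              Fin.tail_cons _ _⟩
          · refine Finset.mem_image.2 ⟨Fin.cons (decide (aval (L 0) w < 0)) σ', ?_,
              Fin.tail_cons _ _⟩
            refine mem_patSet.2 ⟨w, fun j => ?_⟩
            refine Fin.cases ?_ (fun i => ?_) j
            · rw [Fin.cons_zero]
              rcases lt_trichotomy (aval (L 0) w) 0 with h | h | h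
              · simp [h]
              · exact absurd h h0
              · simp [not_lt.2 h.le, h]
            · rw [Fin.cons_succ]
              exact hw i
      have hQsub : patSet M ⊆ patSet (fun i => L i.succ) := by
        intro σ' hσ'
        obtain ⟨k, hk⟩ := mem_patSet.1 hσ'
        refine mem_patSet.2 ⟨w₀ + (k : V), fun i => ?_⟩
        rw [← havalM i k]
        exact hk i
      -- fiber cardinalities
      have hfib : ∀ σ' ∈ patSet (fun i => L i.succ),
          ((patSet L).filter (fun σ => Fin.tail σ = σ')).card
            = if σ' ∈ patSet M then 2 else 1 := by
        intro σ' hσ'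
        have hTsub : ∀ σ ∈ (patSet L).filter (fun σ => Fin.tail σ = σ'),
            σ = Fin.cons true σ' ∨ σ = Fin.cons false σ' := by
          intro σ hσ
          obtain ⟨hσP, hτ⟩ := Finset.mem_filter.1 hσ
          cases h0 : σ 0
          · right; rw [← hτ, ← h0]; exact (Fin.cons_self_tail σ).symm
          · left; rw [← hτ, ← h0]; exact (Fin.cons_self_tail σ).symm
        have hexists : Fin.cons true σ' ∈ patSet L ∨ Fin.cons false σ' ∈ patSet L := by
          have h : σ' ∈ (patSet L).image Fin.tail := himg ▸ hσ'
          obtain ⟨σ, hσ, hτ⟩ := Finset.mem_image.1 h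
          rcases hTsub σ (Finset.mem_filter.2 ⟨hσ, hτ⟩) with h | h
          · left; rwa [← h]
          · right; rwa [← h]
        have hboth : (Fin.cons true σ' ∈ patSet L ∧ Fin.cons false σ' ∈ patSet L)
            ↔ σ' ∈ patSet M := by
          constructor
          · rintro ⟨ht, hf⟩
            obtain ⟨wn, hwn⟩ := mem_patSet.1 ht
            obtain ⟨wp, hwp⟩ := mem_patSet.1 hf
            have h0n : aval (L 0) wn < 0 := by
              have h := hwn 0; rwa [Fin.cons_zero, if_pos rfl] at h
            have h0p : 0 < aval (L 0) wp := by
              have h := hwp 0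
              rwa [Fin.cons_zero, if_neg (by simp)] at h
            have hden : 0 < aval (L 0) wp - aval (L 0) wn := by linarith
            set s : ℝ := aval (L 0) wp / (aval (L 0) wp - aval (L 0) wn) with hsdef
            have hs0 : 0 < s := div_pos h0p hden
            have hs1 : s < 1 := (div_lt_one hden).2 (by linarith)
            have hcomb : ∀ Lj : (V →ₗ[ℝ] ℝ) × ℝ, aval Lj (wp + s • (wn - wp))
                = (1 - s) * aval Lj wp + s * aval Lj wn := by
              intro Lj
              simp only [aval, map_add, map_smul, map_sub, smul_eq_mul]
              ring
            have h0m : aval (L 0) (wp + s • (wn - wp)) = 0 := by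
              rw [hcomb, hsdef]
              field_simp
              ring
            have hker : (wp + s • (wn - wp)) - w₀ ∈ LinearMap.ker (L 0).1 := by
              rw [LinearMap.mem_ker, map_sub]
              have e1 : (L 0).1 (wp + s • (wn - wp)) = aval (L 0) (wp + s • (wn - wp)) - (L 0).2 := by
                simp [aval]
              have e2 : (L 0).1 w₀ = aval (L 0) w₀ - (L 0).2 := by simp [aval]
              rw [e1, e2, h0m, hw₀]
              ring
            refine mem_patSet.2 ⟨⟨_, hker⟩, fun i => ?_⟩
            rw [havalM]
            have hwm : w₀ + ((wp + s • (wn - wp)) - w₀) = wp + s • (wn - wp) := by abel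
            rw [hwm, hcomb]
            have hn := hwn i.succ
            have hp := hwp i.succ
            rw [Fin.cons_succ] at hn hp
            cases hσ : σ' i <;>
              simp only [hσ, Bool.false_eq_true, if_false, if_true, eq_self_iff_true] at hn hp ⊢ <;>
              nlinarith
          · intro hσM
            obtain ⟨k, hk⟩ := mem_patSet.1 hσM
            have hw' : ∀ i, if σ' i then aval (L i.succ) (w₀ + (k : V)) < 0
                else 0 < aval (L i.succ) (w₀ + (k : V)) := by
              intro i
              rw [← havalM i k]
              exact hk i
            have h0' : aval (L 0) (w₀ + (k : V)) = 0 := by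
              have h : aval (L 0) (w₀ + (k : V)) = aval (L 0) w₀ + (L 0).1 (k : V) := by
                simp only [aval, map_add]
                ring
              rw [h, hw₀, LinearMap.mem_ker.1 k.2, add_zero]
            exact ⟨hrealize σ' _ hw' h0' true, hrealize σ' _ hw' h0' false⟩
        have hfilT : (patSet L).filter (fun σ => Fin.tail σ = σ')
            = ({Fin.cons true σ', Fin.cons false σ'} : Finset (Fin (n+1) → Bool)).filter
                (fun σ => σ ∈ patSet L) := by
          ext σ
          simp only [Finset.mem_filter, Finset.mem_insert, Finset.mem_singleton]
          constructor
          · intro h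
            exact ⟨hTsub σ (Finset.mem_filter.2 h), h.1⟩
          · rintro ⟨h | h, hP⟩ <;> subst h <;>
              exact ⟨hP, by rw [Fin.tail_cons]⟩
        have hne : (Fin.cons true σ' : Fin (n+1) → Bool) ≠ Fin.cons false σ' := by
          intro h
          have h0 := congrFun h 0
          simp at h0
        rw [hfilT, Finset.filter_insert, Finset.filter_singleton]
        by_cases h1 : Fin.cons true σ' ∈ patSet L <;>
          by_cases h2 : Fin.cons false σ' ∈ patSet L
        · rw [if_pos h1, if_pos h2, if_pos (hboth.1 ⟨h1, h2⟩),
            Finset.card_insert_of_notMem (by simp [hne]), Finset.card_singleton]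
        · rw [if_pos h1, if_neg h2, if_neg (fun hM => h2 (hboth.2 hM).2)]
          simp
        · rw [if_neg h1, if_pos h2, if_neg (fun hM => h1 (hboth.2 hM).1)]
          simp
        · rcases hexists with h | h
          · exact absurd h h1
          · exact absurd h h2
      -- assemble the count
      have hcount : (patSet L).card
          = (patSet (fun i => L i.succ)).card + (patSet M).card := by
        rw [Finset.card_eq_sum_card_fiberwise
          (f := Fin.tail) (t := patSet (fun i => L i.succ))
          (fun σ hσ => himg ▸ Finset.mem_image_of_mem _ hσ)]
        rw [Finset.sum_congr rfl hfib]
        have hsplit : ∀ σ' ∈ patSet (fun i => L i.succ),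
            (if σ' ∈ patSet M then 2 else 1)
              = 1 + (if σ' ∈ patSet M then 1 else 0) := by
          intro σ' _
          split_ifs <;> ring
        rw [Finset.sum_congr rfl hsplit, Finset.sum_add_distrib, Finset.sum_const,
          smul_eq_mul, mul_one, Finset.sum_ite_mem,
          Finset.inter_eq_right.2 hQsub, Finset.sum_const, smul_eq_mul, mul_one]
      rw [hcount, ih (e + 1) V hd (fun i => L i.succ) hGP1' hGP2',
        ih e ↥(LinearMap.ker (L 0).1) hK M hGP1M hGP2M]
      -- binomial arithmetic
      rw [Finset.sum_range_succ' (fun i => Nat.choose (n + 1) i) (e + 1),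
        Finset.sum_range_succ' (fun i => Nat.choose n i) (e + 1)]
      simp only [Nat.choose_succ_succ, Nat.choose_zero_right]
      rw [Finset.sum_add_distrib]
      simp only [Nat.succ_eq_add_one]
      omega

end Part4

section Part5

open scoped RealInnerProductSpace

def lq (x : Plane) : (Plane × ℝ) →ₗ[ℝ] ℝ where
  toFun w := -2 * ⟪x, w.1⟫ - w.2
  map_add' w w' := by simp only [Prod.fst_add, Prod.snd_add, inner_add_right]; ring
  map_smul' c w := by
    simp only [Prod.smul_fst, Prod.smul_snd, inner_smul_right, RingHom.id_apply,
      smul_eq_mul]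
    ring

def Lfun (x : Plane) : ((Plane × ℝ) →ₗ[ℝ] ℝ) × ℝ := (lq x, ‖x‖ ^ 2)

theorem aval_Lfun (x p : Plane) (u : ℝ) :
    aval (Lfun x) (p, u) = dist p x ^ 2 - ‖p‖ ^ 2 - u := by
  have h : dist p x ^ 2 = ‖p‖ ^ 2 - 2 * ⟪p, x⟫ + ‖x‖ ^ 2 := by
    rw [dist_eq_norm]; exact norm_sub_sq_real p x
  show -2 * ⟪x, p⟫ - u + ‖x‖ ^ 2 = dist p x ^ 2 - ‖p‖ ^ 2 - u
  rw [h, real_inner_comm]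
  ring

theorem collinear_of_comb {x y z : Plane} {a b c : ℝ} (ha : a ≠ 0)
    (hsum : a + b + c = 0) (hvec : a • x + b • y + c • z = 0) :
    Collinear ℝ ({x, y, z} : Set Plane) := by
  have hb : b = -a - c := by linarith
  subst hb
  have key2 : a • x = c • (y - z) + a • y := by
    rw [← sub_eq_zero, ← hvec, smul_sub, sub_smul, neg_smul]
    abel
  have hx : x = (c / a) • (y - z) + y := by
    refine smul_right_injective Plane ha ?_
    show a • x = a • ((c / a) • (y - z) + y)
    rw [key2, smul_add, smul_smul]
    have hca : a * (c / a) = c := by field_simp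
    rw [hca]
  rw [collinear_iff_of_mem (Set.mem_insert_of_mem _ (Set.mem_insert _ _))]
  refine ⟨y - z, fun p hp => ?_⟩
  simp only [Set.mem_insert_iff, Set.mem_singleton_iff] at hp
  rcases hp with rfl | rfl | rfl
  · exact ⟨c / a, by rw [vadd_eq_add, add_comm]; rw [add_comm] at hx; exact hx⟩
  · exact ⟨0, by simp⟩
  · refine ⟨-1, ?_⟩
    rw [vadd_eq_add, neg_one_smul, neg_sub]
    abel

theorem affine_zero3 {x y z : Plane}
    (hcol : ¬ Collinear ℝ ({x, y, z} : Set Plane)) {a b c : ℝ}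
    (hsum : a + b + c = 0) (hvec : a • x + b • y + c • z = 0) :
    a = 0 ∧ b = 0 ∧ c = 0 := by
  have ha : a = 0 := by
    by_contra ha
    exact hcol (collinear_of_comb ha hsum hvec)
  have hb : b = 0 := by
    by_contra hb
    have h := collinear_of_comb hb (show b + c + a = 0 by linarith)
      (show b • y + c • z + a • x = 0 by rw [← hvec]; abel)
    refine hcol ?_
    have hset : ({y, z, x} : Set Plane) = {x, y, z} := by
      ext w; simp only [Set.mem_insert_iff, Set.mem_singleton_iff]; tauto
    rwa [hset] at h
  have hc : c = 0 := by
    by_contra hc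
    have h := collinear_of_comb hc (show c + a + b = 0 by linarith)
      (show c • z + a • x + b • y = 0 by rw [← hvec]; abel)
    refine hcol ?_
    have hset : ({z, x, y} : Set Plane) = {x, y, z} := by
      ext w; simp only [Set.mem_insert_iff, Set.mem_singleton_iff]; tauto
    rwa [hset] at h
  exact ⟨ha, hb, hc⟩

theorem indep_lq {S : Finset Plane} (hgp : GenPos S) {N : ℕ} {pt : Fin N → Plane}
    (hinj : Function.Injective pt) (hmem : ∀ i, pt i ∈ S)
    (I : Finset (Fin N)) (hI : I.card ≤ 3) : Indep I (fun i => lq (pt i)) := by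
  intro a hsuml
  have happ : ∀ w : Plane × ℝ, ∑ j ∈ I, a j * lq (pt j) w = 0 := by
    intro w
    have h := congrArg (fun m : (Plane × ℝ) →ₗ[ℝ] ℝ => m w) hsuml
    simpa only [LinearMap.coe_sum, Finset.sum_apply, LinearMap.smul_apply,
      smul_eq_mul, LinearMap.zero_apply] using h
  have hsc : ∑ j ∈ I, a j = 0 := by
    have h := happ ((0 : Plane), (-1 : ℝ))
    have he : ∀ j ∈ I, a j * lq (pt j) ((0 : Plane), (-1 : ℝ)) = a j := by
      intro j _
      have h1 : lq (pt j) ((0 : Plane), (-1 : ℝ)) = 1 := by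
        show -2 * ⟪pt j, (0 : Plane)⟫ - (-1) = 1
        rw [inner_zero_right]; ring
      rw [h1, mul_one]
    rwa [Finset.sum_congr rfl he] at h
  have hvec : ∑ j ∈ I, a j • pt j = 0 := by
    set q : Plane := ∑ j ∈ I, a j • pt j with hq
    have h := happ (q, (0 : ℝ))
    have he : ∀ j ∈ I, a j * lq (pt j) (q, (0 : ℝ)) = -2 * (a j * ⟪pt j, q⟫) := by
      intro j _
      have h1 : lq (pt j) (q, (0 : ℝ)) = -2 * ⟪pt j, q⟫ - 0 := rfl
      rw [h1]; ring
    rw [Finset.sum_congr rfl he, ← Finset.mul_sum] at h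
    have h2 : ∑ j ∈ I, a j * ⟪pt j, q⟫ = 0 := by linarith
    have h3 : ⟪q, q⟫ = 0 := by
      rw [hq, sum_inner]
      rw [← h2]
      refine Finset.sum_congr rfl fun j _ => ?_
      rw [real_inner_smul_left]
    exact inner_self_eq_zero.1 h3
  intro i hi
  have h3 : I.card ≤ 3 := hI
  interval_cases hcard : I.card
  · exact absurd (Finset.card_eq_zero.1 hcard ▸ hi) (Finset.notMem_empty i)
  · obtain ⟨i1, rfl⟩ := Finset.card_eq_one.1 hcard
    rw [Finset.mem_singleton] at hi
    subst hi
    rwa [Finset.sum_singleton] at hsc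
  · obtain ⟨i1, i2, h12, rfl⟩ := Finset.card_eq_two.1 hcard
    rw [Finset.sum_insert (by simp [h12]), Finset.sum_singleton] at hsc hvec
    have ha2 : a i2 = -a i1 := by linarith
    rw [ha2, neg_smul, ← sub_eq_add_neg, ← smul_sub] at hvec
    have hne : pt i1 - pt i2 ≠ 0 := sub_ne_zero.2 (fun h => h12 (hinj h))
    have ha1 : a i1 = 0 := by
      rcases smul_eq_zero.1 hvec with h | h
      · exact h
      · exact absurd h hne
    rcases Finset.mem_insert.1 hi with rfl | hi'
    · exact ha1
    · rw [Finset.mem_singleton] at hi'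
      subst hi'
      rw [ha2, ha1, neg_zero]
  · obtain ⟨i1, i2, i3, h12, h13, h23, rfl⟩ := Finset.card_eq_three.1 hcard
    rw [Finset.sum_insert (by simp [h12, h13]), Finset.sum_insert (by simp [h23]),
      Finset.sum_singleton] at hsc hvec
    have hTsub : ({pt i1, pt i2, pt i3} : Finset Plane) ⊆ S := by
      intro x hx
      rcases Finset.mem_insert.1 hx with rfl | hx'
      · exact hmem i1
      rcases Finset.mem_insert.1 hx' with rfl | hx''
      · exact hmem i2
      · rw [Finset.mem_singleton] at hx''
        subst hx''
        exact hmem i3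
    have hTcard : ({pt i1, pt i2, pt i3} : Finset Plane).card = 3 := by
      rw [Finset.card_insert_of_notMem, Finset.card_insert_of_notMem,
        Finset.card_singleton]
      · simp only [Finset.mem_singleton]
        exact fun h => h23 (hinj h)
      · simp only [Finset.mem_insert, Finset.mem_singleton]
        push_neg
        exact ⟨fun h => h12 (hinj h), fun h => h13 (hinj h)⟩
    have hncol : ¬ Collinear ℝ ({pt i1, pt i2, pt i3} : Set Plane) := by
      have h := hgp.1 _ hTsub hTcard
      have hco : (({pt i1, pt i2, pt i3} : Finset Plane) : Set Plane)
          = ({pt i1, pt i2, pt i3} : Set Plane) := by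
        simp only [Finset.coe_insert, Finset.coe_singleton]
      rwa [hco] at h
    have hvec' : a i1 • pt i1 + a i2 • pt i2 + a i3 • pt i3 = 0 := by
      rw [add_assoc]; exact hvec
    obtain ⟨h1, h2, h3⟩ := affine_zero3 hncol (by linarith : a i1 + a i2 + a i3 = 0) hvec'
    rcases Finset.mem_insert.1 hi with rfl | hi'
    · exact h1
    rcases Finset.mem_insert.1 hi' with rfl | hi''
    · exact h2
    · rw [Finset.mem_singleton] at hi''
      subst hi''
      exact h3

theorem no_four_zero {S : Finset Plane} (hgp : GenPos S) {N : ℕ} {pt : Fin N → Plane}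
    (hinj : Function.Injective pt) (hmem : ∀ i, pt i ∈ S)
    (I : Finset (Fin N)) (hI : I.card = 4) :
    ¬∃ w : Plane × ℝ, ∀ i ∈ I, aval (Lfun (pt i)) w = 0 := by
  rintro ⟨⟨p, u⟩, hw⟩
  refine hgp.2 (I.image pt) ?_ ?_ ⟨p, Real.sqrt (‖p‖ ^ 2 + u), ?_⟩
  · intro x hx
    obtain ⟨i, _, rfl⟩ := Finset.mem_image.1 hx
    exact hmem i
  · rw [Finset.card_image_of_injective _ hinj, hI]
  · intro x hx
    obtain ⟨i, hi, rfl⟩ := Finset.mem_image.1 hx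
    have h := hw i hi
    rw [aval_Lfun] at h
    have h2 : dist (pt i) p ^ 2 = ‖p‖ ^ 2 + u := by rw [dist_comm]; linarith
    rw [← h2, Real.sqrt_sq dist_nonneg]

end Part5

section Part6

theorem sum_fVec (S : Finset Plane) :
    ∑ k ∈ Finset.range (S.card + 1), fVec S k
      = (S.powerset.filter (fun A => (VorRegion S A).Nonempty)).card := by
  rw [Finset.card_eq_sum_card_fiberwise
    (f := Finset.card) (t := Finset.range (S.card + 1))
    (fun A hA => Finset.mem_range.2 (Nat.lt_succ_of_le
      (Finset.card_le_card (Finset.mem_powerset.1 (Finset.mem_filter.1 hA).1))))]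
  refine Finset.sum_congr rfl fun k _ => ?_
  rw [fVec, Finset.powersetCard_eq_filter, Finset.filter_filter, Finset.filter_filter]
  congr 1
  ext A
  simp only [Finset.mem_filter]
  tauto

set_option maxHeartbeats 2000000 in
theorem card_sep (S : Finset Plane) (hgp : GenPos S) (hS : S.Nonempty) :
    (S.powerset.filter (fun A => (VorRegion S A).Nonempty)).card
      = ∑ i ∈ Finset.range 4, (S.card).choose i := by
  classical
  set pt : Fin S.card → Plane := fun i => ((S.equivFin.symm i : {x // x ∈ S}) : Plane)
    with hpt
  have hinj : Function.Injective pt := fun i j h =>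
    S.equivFin.symm.injective (Subtype.ext h)
  have hmem : ∀ i, pt i ∈ S := fun i => (S.equivFin.symm i).2
  have hsurj : ∀ x ∈ S, ∃ i, pt i = x := fun x hx =>
    ⟨S.equivFin ⟨x, hx⟩, by simp [hpt]⟩
  have hfr : Module.finrank ℝ (Plane × ℝ) = 3 := by
    rw [Module.finrank_prod, finrank_euclideanSpace_fin, Module.finrank_self]
  have hcount := count_pats S.card 3 (Plane × ℝ) hfr (fun i => Lfun (pt i))
    (fun I hI => indep_lq hgp hinj hmem I hI)
    (fun I hI => no_four_zero hgp hinj hmem I hI)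
  rw [← hcount]
  refine (Finset.card_bij
    (fun σ _ => (Finset.univ.filter (fun i => σ i = true)).image pt) ?_ ?_ ?_).symm
  · -- maps into the filtered powerset
    intro σ hσ
    obtain ⟨w, hw⟩ := mem_patSet.1 hσ
    obtain ⟨p, u⟩ := w
    rw [Finset.mem_filter, Finset.mem_powerset]
    constructor
    · intro x hx
      obtain ⟨i, _, rfl⟩ := Finset.mem_image.1 hx
      exact hmem i
    · refine ⟨p, fun x hx y hy => ?_⟩
      rw [Finset.mem_sdiff] at hy
      obtain ⟨i, hiσ, rfl⟩ := Finset.mem_image.1 hx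
      obtain ⟨j, rfl⟩ := hsurj y hy.1
      have hσi : σ i = true := (Finset.mem_filter.1 hiσ).2
      have hσj : σ j = false := by
        cases hb : σ j
        · rfl
        · exact absurd (Finset.mem_image.2 ⟨j,
            Finset.mem_filter.2 ⟨Finset.mem_univ j, hb⟩, rfl⟩) hy.2
      have ha1 : aval (Lfun (pt i)) (p, u) < 0 := by
        have h := hw i
        rwa [hσi, if_pos rfl] at h
      have ha2 : 0 < aval (Lfun (pt j)) (p, u) := by
        have h := hw j
        rwa [hσj, if_neg (by simp)] at h
      rw [aval_Lfun] at ha1 ha2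
      have hlt : dist p (pt i) ^ 2 < dist p (pt j) ^ 2 := by linarith
      exact le_of_lt (lt_of_pow_lt_pow_left₀ 2 dist_nonneg hlt)
  · -- injective
    intro σ1 h1 σ2 h2 heq
    have hkey : ∀ (σ : Fin S.card → Bool) (i : Fin S.card),
        (pt i ∈ (Finset.univ.filter (fun j => σ j = true)).image pt) ↔ σ i = true := by
      intro σ i
      constructor
      · intro h
        obtain ⟨j, hj, hji⟩ := Finset.mem_image.1 h
        have hj' := hinj hji
        subst hj'
        exact (Finset.mem_filter.1 hj).2
      · intro h
        exact Finset.mem_image.2 ⟨i, Finset.mem_filter.2 ⟨Finset.mem_univ i, h⟩, rfl⟩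
    funext i
    have heq' : (Finset.univ.filter (fun j => σ1 j = true)).image pt
        = (Finset.univ.filter (fun j => σ2 j = true)).image pt := heq
    have hiff : σ1 i = true ↔ σ2 i = true := by
      rw [← hkey σ1 i, ← hkey σ2 i, heq']
    cases hb1 : σ1 i <;> cases hb2 : σ2 i <;> simp_all
  · -- surjective : here the perturbation argument is used
    intro A hA
    rw [Finset.mem_filter, Finset.mem_powerset] at hA
    obtain ⟨hAsub, p, hp⟩ := hA
    set g : Plane → ℝ := fun x => dist p x ^ 2 with hg
    set u : ℝ := (if h : A.Nonempty then A.sup' h g else S.inf' hS g) - ‖p‖ ^ 2 with hu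
    have hweakA : ∀ i, pt i ∈ A → aval (Lfun (pt i)) (p, u) ≤ 0 := by
      intro i hiA
      rw [aval_Lfun, hu]
      have hAne : A.Nonempty := ⟨_, hiA⟩
      rw [dif_pos hAne]
      have h := Finset.le_sup' g hiA
      simp only [hg] at h
      linarith
    have hweakB : ∀ i, pt i ∉ A → 0 ≤ aval (Lfun (pt i)) (p, u) := by
      intro i hiA
      rw [aval_Lfun, hu]
      by_cases hAne : A.Nonempty
      · rw [dif_pos hAne]
        have hsup : A.sup' hAne g ≤ g (pt i) := by
          refine Finset.sup'_le _ _ fun x hx => ?_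
          have hle := hp x hx (pt i) (Finset.mem_sdiff.2 ⟨hmem i, hiA⟩)
          exact pow_le_pow_left₀ dist_nonneg hle 2
        simp only [hg] at hsup ⊢
        linarith
      · rw [dif_neg hAne]
        have hinf : S.inf' hS g ≤ g (pt i) := Finset.inf'_le _ (hmem i)
        simp only [hg] at hinf ⊢
        linarith
    set Z : Finset (Fin S.card) :=
      Finset.univ.filter (fun i => aval (Lfun (pt i)) (p, u) = 0) with hZ
    have hZ3 : Z.card ≤ 3 := by
      by_contra h
      push_neg at h
      obtain ⟨T, hTsub, hT4⟩ := Finset.exists_subset_card_eq (show 4 ≤ Z.card by omega)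
      exact no_four_zero hgp hinj hmem T hT4
        ⟨(p, u), fun i hi => (Finset.mem_filter.1 (hTsub hi)).2⟩
    obtain ⟨v, hv⟩ := surj_of_indep (indep_lq hgp hinj hmem Z hZ3)
      (fun i => if pt i ∈ A then (-1 : ℝ) else 1)
    obtain ⟨ε, hε, hεp⟩ := small_eps (Finset.univ \ Z)
      (fun i : Fin S.card => aval (Lfun (pt i)) (p, u))
      (fun i : Fin S.card => (Lfun (pt i)).1 v)
      (fun i hi => by
        rw [Finset.mem_sdiff, hZ, Finset.mem_filter] at hi
        have h := hi.2
        push_neg at h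
        exact h (Finset.mem_univ i))
    have hstrict : ∀ i, if pt i ∈ A then aval (Lfun (pt i)) ((p, u) + ε • v) < 0
        else 0 < aval (Lfun (pt i)) ((p, u) + ε • v) := by
      intro i
      have hav : aval (Lfun (pt i)) ((p, u) + ε • v)
          = aval (Lfun (pt i)) (p, u) + ε * (Lfun (pt i)).1 v := aval_add_smul _ _ _ _
      by_cases hiZ : i ∈ Z
      · have h0 : aval (Lfun (pt i)) (p, u) = 0 := (Finset.mem_filter.1 hiZ).2
        have hvi := hv i hiZ
        by_cases hiA : pt i ∈ A
        · rw [if_pos hiA]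
          rw [if_pos hiA] at hvi
          rw [hav, h0, zero_add, show (Lfun (pt i)).1 v = lq (pt i) v from rfl, hvi]
          linarith
        · rw [if_neg hiA]
          rw [if_neg hiA] at hvi
          rw [hav, h0, zero_add, show (Lfun (pt i)).1 v = lq (pt i) v from rfl, hvi]
          linarith
      · have hne := hεp ε (le_of_eq (abs_of_pos hε)) i
          (Finset.mem_sdiff.2 ⟨Finset.mem_univ i, hiZ⟩)
        have hsp := sign_helper hne
        have hnz : aval (Lfun (pt i)) (p, u) ≠ 0 := by
          rw [hZ, Finset.mem_filter] at hiZ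
          push_neg at hiZ
          exact hiZ (Finset.mem_univ i)
        by_cases hiA : pt i ∈ A
        · rw [if_pos hiA, hav]
          exact hsp.1 (lt_of_le_of_ne (hweakA i hiA) hnz)
        · rw [if_neg hiA, hav]
          exact hsp.2 (lt_of_le_of_ne (hweakB i hiA) (Ne.symm hnz))
    refine ⟨fun i => decide (pt i ∈ A), mem_patSet.2 ⟨(p, u) + ε • v, fun i => ?_⟩, ?_⟩
    · have h := hstrict i
      by_cases hiA : pt i ∈ A
      · rw [if_pos hiA] at h
        simpa [hiA] using h
      · rw [if_neg hiA] at h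
        simpa [hiA] using h
    · ext x
      simp only [Finset.mem_image, Finset.mem_filter, Finset.mem_univ, true_and,
        decide_eq_true_eq]
      constructor
      · rintro ⟨i, hiA, rfl⟩
        exact hiA
      · intro hx
        obtain ⟨i, rfl⟩ := hsurj x (hAsub hx)
        exact ⟨i, hx, rfl⟩

end Part6

section Part7

theorem choose_two_even (m : ℕ) : 2 ∣ (4 * m).choose 2 := by
  rw [Nat.choose_two_right]
  have h : 4 * m * (4 * m - 1) = 2 * (2 * (m * (4 * m - 1))) := by ring
  rw [h, Nat.mul_div_cancel_left _ (by norm_num : 0 < 2)]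
  exact ⟨m * (4 * m - 1), rfl⟩

theorem choose_three_even (m : ℕ) : 2 ∣ (4 * m).choose 3 := by
  have hd := Nat.descFactorial_eq_factorial_mul_choose (4 * m) 3
  have hdf : Nat.descFactorial (4 * m) 3 = (4 * m - 2) * ((4 * m - 1) * (4 * m)) := by
    simp [Nat.descFactorial_succ, Nat.descFactorial_zero]
  have hfac : Nat.factorial 3 = 6 := by decide
  rw [hdf, hfac] at hd
  have h2 : 4 * m - 2 = 2 * (2 * m - 1) := by omega
  have h3 : 2 * (2 * m - 1) * ((4 * m - 1) * (4 * m))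
      = 2 * (4 * (m * ((2 * m - 1) * (4 * m - 1)))) := by ring
  rw [h2, h3] at hd
  have h6 : (6 : ℕ) * (4 * m).choose 3 = 2 * (3 * (4 * m).choose 3) := by ring
  rw [h6] at hd
  have h5 : 3 * (4 * m).choose 3 = 4 * (m * ((2 * m - 1) * (4 * m - 1))) :=
    Nat.eq_of_mul_eq_mul_left (by norm_num) hd.symm
  have h7 : (4 : ℕ) ∣ (4 * m).choose 3 * 3 := ⟨m * ((2 * m - 1) * (4 * m - 1)), by omega⟩
  have h8 : (4 : ℕ) ∣ (4 * m).choose 3 :=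
    (Nat.Coprime.dvd_of_dvd_mul_right (by decide) h7)
  exact dvd_trans ⟨2, rfl⟩ h8

end Part7


/-- For `n ≡ 0 (mod 4)`, the reduced Euler characteristic of the
Voronoi poset is odd. -/
theorem euler_char_odd (S : Finset Plane) (n : ℕ) (hn : S.card = n)
    (hn4 : 4 ≤ n) (hmod : n % 4 = 0) (hgp : GenPos S) :
    Odd (∑ k ∈ Finset.range (n + 1), (-1 : ℤ) ^ k * (fVec S k : ℤ)) := by
  subst hn
  have hS : S.Nonempty := Finset.card_pos.1 (by omega)
  have hkey : ∑ k ∈ Finset.range (S.card + 1), fVec S k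
      = ∑ i ∈ Finset.range 4, (S.card).choose i := by
    rw [sum_fVec]
    exact card_sep S hgp hS
  obtain ⟨m, hm⟩ : ∃ m, S.card = 4 * m := ⟨S.card / 4, by omega⟩
  have hNodd : Odd (∑ i ∈ Finset.range 4, (S.card).choose i) := by
    rw [show (4 : ℕ) = 3 + 1 from rfl, Finset.sum_range_succ, Finset.sum_range_succ,
      Finset.sum_range_succ, Finset.sum_range_one, Nat.choose_zero_right,
      Nat.choose_one_right]
    obtain ⟨x2, hx2⟩ := hm ▸ choose_two_even m
    obtain ⟨x3, hx3⟩ := hm ▸ choose_three_even m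
    rw [Nat.odd_iff]
    omega
  obtain ⟨t, ht⟩ := hNodd
  have hsum : ∑ k ∈ Finset.range (S.card + 1), fVec S k = 2 * t + 1 := by omega
  have hcast : (((∑ k ∈ Finset.range (S.card + 1), (-1 : ℤ) ^ k * (fVec S k : ℤ)) : ℤ) :
      ZMod 2) = 1 := by
    push_cast
    have hneg : (-1 : ZMod 2) = 1 := by decide
    rw [Finset.sum_congr rfl (fun k _ => by rw [hneg, one_pow, one_mul])]
    rw [← Nat.cast_sum, hsum]
    push_cast
    rw [show (2 : ZMod 2) = 0 by decide]
    ring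
  rw [← Int.not_even_iff_odd]
  intro hev
  have hdvd : (2 : ℤ) ∣ ∑ k ∈ Finset.range (S.card + 1), (-1 : ℤ) ^ k * (fVec S k : ℤ) :=
    hev.two_dvd
  have h0 := (ZMod.intCast_zmod_eq_zero_iff_dvd _ 2).2 hdvd
  rw [hcast] at h0
  exact one_ne_zero h0
end
end
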